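/- arXiv:1008.3250 — 12 statements merged into one kernel-verified Lean document; each statement's English description precedes it below -/
import Mathlib

section
/- Let X be a set with a Möbius structure (a maximal family of pairwise Möbius equivalent extended metrics), and let d, d' be two metrics in the structure both having the same remote point ω ∈ X. Then there exists λ > 0 such that d'(x,y) = λ·d(x,y) for all x, y ∈ X. -/
open scoped ENNReal

/-- The "finite-part" distance used to compute cross-ratio triples in an extended
metric space with remote point `ω`, following the conventions for `∞`. -/
noncomputable def crtDist {X : Type*} (d : X → X → ℝ≥0∞) (ω : X) (a b : X) : ℝ≥0∞ :=
  open Classical in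
  if a = ω ∧ b = ω then 0 else if a = ω ∨ b = ω then 1 else d a b

/-- A quadruple is admissible if no entry occurs three or four times. -/
def Admissible {X : Type*} (x y z w : X) : Prop :=
  ¬(x = y ∧ y = z) ∧ ¬(x = y ∧ y = w) ∧ ¬(x = z ∧ z = w) ∧ ¬(y = z ∧ z = w)

/-- If two extended metrics on `X` are Möbius equivalent (all cross-ratio triples of
admissible quadruples coincide) and have the same remote point `ω`, then they are
homothetic: `d' = λ·d` for some `λ > 0`. -/
theorem stmt_0 {X : Type*} (d d' : X → X → ℝ≥0∞) (ω : X)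
    (hd_symm : ∀ x y, d x y = d y x)
    (hd'_symm : ∀ x y, d' x y = d' y x)
    (hd_zero : ∀ x y, d x y = 0 ↔ x = y)
    (hd'_zero : ∀ x y, d' x y = 0 ↔ x = y)
    (hd_fin : ∀ x y, x ≠ ω → y ≠ ω → d x y ≠ ∞)
    (hd'_fin : ∀ x y, x ≠ ω → y ≠ ω → d' x y ≠ ∞)
    (hd_inf : ∀ x, x ≠ ω → d x ω = ∞)
    (hd'_inf : ∀ x, x ≠ ω → d' x ω = ∞)
    (hd_tri : ∀ x y z, x ≠ ω → y ≠ ω → z ≠ ω → d x z ≤ d x y + d y z)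
    (hd'_tri : ∀ x y z, x ≠ ω → y ≠ ω → z ≠ ω → d' x z ≤ d' x y + d' y z)
    (hmoeb : ∀ x y z w : X, Admissible x y z w →
      (crtDist d ω x y * crtDist d ω z w) * (crtDist d' ω x z * crtDist d' ω y w) =
        (crtDist d' ω x y * crtDist d' ω z w) * (crtDist d ω x z * crtDist d ω y w) ∧
      (crtDist d ω x z * crtDist d ω y w) * (crtDist d' ω x w * crtDist d' ω y z) =
        (crtDist d' ω x z * crtDist d' ω y w) * (crtDist d ω x w * crtDist d ω y z) ∧
      (crtDist d ω x y * crtDist d ω z w) * (crtDist d' ω x w * crtDist d' ω y z) =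
        (crtDist d' ω x y * crtDist d' ω z w) * (crtDist d ω x w * crtDist d ω y z)) :
    ∃ lam : ℝ≥0∞, 0 < lam ∧ lam ≠ ∞ ∧ ∀ x y : X, d' x y = lam * d x y := by
  classical
  have cancel : ∀ a b : ℝ≥0∞, b ≠ 0 → b ≠ ∞ → a * b / b = a := by
    intro a b h0 ht
    rw [mul_div_assoc, ENNReal.div_self h0 ht, mul_one]
  by_cases hX : ∃ p q : X, p ≠ ω ∧ q ≠ ω ∧ p ≠ q
  · obtain ⟨p, q, hp, hq, hpq⟩ := hX
    have key : ∀ a b c : X, a ≠ ω → b ≠ ω → c ≠ ω → ¬(a = b ∧ b = c) →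
        d a b * d' a c = d' a b * d a c := by
      intro a b c ha hb hc habc
      have adm : Admissible a b c ω :=
        ⟨habc, fun h => hb h.2, fun h => hc h.2, fun h => hc h.2⟩
      have h := (hmoeb a b c ω adm).1
      simpa [crtDist, ha, hb, hc] using h
    have hdpq0 : d p q ≠ 0 := fun h => hpq ((hd_zero p q).1 h)
    have hdpqtop : d p q ≠ ∞ := hd_fin p q hp hq
    have hd'pq0 : d' p q ≠ 0 := fun h => hpq ((hd'_zero p q).1 h)
    set lam := d' p q / d p q with hlam
    have hlam0 : 0 < lam := ENNReal.div_pos hd'pq0 hdpqtop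
    have hlamtop : lam ≠ ∞ := (ENNReal.div_lt_top (hd'_fin p q hp hq) hdpq0).ne
    have hstep : ∀ a : X, a ≠ ω → d' p a = lam * d p a := by
      intro a ha
      by_cases hpa : p = a
      · rw [(hd'_zero p a).2 hpa, (hd_zero p a).2 hpa, mul_zero]
      · have h := key p a q hp ha hq (fun h => hpa h.1)
        have hcancel : d' p a = d' p a * d p q / d p q := (cancel _ _ hdpq0 hdpqtop).symm
        rw [hcancel, ← h, hlam, div_eq_mul_inv, div_eq_mul_inv]
        ring
    refine ⟨lam, hlam0, hlamtop, fun x y => ?_⟩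
    by_cases hx : x = ω
    · by_cases hy : y = ω
      · rw [(hd'_zero x y).2 (hx.trans hy.symm), (hd_zero x y).2 (hx.trans hy.symm), mul_zero]
      · rw [hd'_symm, hd_symm, hx, hd'_inf y hy, hd_inf y hy, ENNReal.mul_top hlam0.ne']
    · by_cases hy : y = ω
      · rw [hy, hd'_inf x hx, hd_inf x hx, ENNReal.mul_top hlam0.ne']
      · by_cases hxy : x = y
        · rw [(hd'_zero x y).2 hxy, (hd_zero x y).2 hxy, mul_zero]
        · by_cases hxp : x = p
          · rw [hxp]; exact hstep y hy
          · have hdxp0 : d x p ≠ 0 := fun h => hxp ((hd_zero x p).1 h)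
            have hdxptop : d x p ≠ ∞ := hd_fin x p hx hp
            have h := key x y p hx hy hp (fun h => hxy h.1)
            have hxp' : d' x p = lam * d x p := by
              rw [hd'_symm, hd_symm, hstep x hx]
            rw [hxp'] at h
            have hc : d' x y = d' x y * d x p / d x p := (cancel _ _ hdxp0 hdxptop).symm
            rw [hc, ← h, show d x y * (lam * d x p) = (lam * d x y) * d x p by ring]
            exact cancel _ _ hdxp0 hdxptop
  · refine ⟨1, one_pos, ENNReal.one_ne_top, fun x y => ?_⟩
    rw [one_mul]
    by_cases hxy : x = y
    · rw [(hd'_zero x y).2 hxy, (hd_zero x y).2 hxy]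
    · by_cases hx : x = ω
      · have hy : y ≠ ω := fun h => hxy (hx.trans h.symm)
        rw [hd'_symm, hd_symm, hx, hd'_inf y hy, hd_inf y hy]
      · by_cases hy : y = ω
        · rw [hy, hd'_inf x hx, hd_inf x hx]
        · exact absurd ⟨x, y, hx, hy, hxy⟩ hX
end

section
/- Let (X,d) be a Ptolemy metric space (every quadruple satisfies d(x,y)d(z,w) ≤ d(x,z)d(y,w) + d(x,w)d(y,z)) and let z ∈ X be a point which is not the remote point. Define d_z(x,y) = d(x,y)/(d(z,x)·d(z,y)) for x,y ∈ X \ {z}. Then d_z is a metric on X \ {z}. -/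
/-- If `(X,d)` is a Ptolemy metric space and `z ∈ X`, then the inversion
`d_z(x,y) = d(x,y)/(d(z,x)·d(z,y))` is a metric on `X \ {z}`. -/
theorem stmt_1 {X : Type*} [MetricSpace X]
    (hpt : ∀ x y z w : X, dist x y * dist z w ≤ dist x z * dist y w + dist x w * dist y z)
    (z : X) :
    let dz : X → X → ℝ := fun x y => dist x y / (dist z x * dist z y)
    (∀ x y : X, x ≠ z → y ≠ z → 0 ≤ dz x y) ∧
    (∀ x y : X, x ≠ z → y ≠ z → (dz x y = 0 ↔ x = y)) ∧
    (∀ x y : X, x ≠ z → y ≠ z → dz x y = dz y x) ∧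
    (∀ x y w : X, x ≠ z → y ≠ z → w ≠ z → dz x y ≤ dz x w + dz w y) := by
  intro dz
  refine ⟨?_, ?_, ?_, ?_⟩
  · intro x y hx hy
    exact div_nonneg dist_nonneg (mul_nonneg dist_nonneg dist_nonneg)
  · intro x y hx hy
    have hzx : 0 < dist z x := dist_pos.mpr hx.symm
    have hzy : 0 < dist z y := dist_pos.mpr hy.symm
    simp only [dz, div_eq_zero_iff, mul_eq_zero]
    constructor
    · rintro (h | h | h)
      · exact dist_eq_zero.mp h
      · exact absurd h hzx.ne'
      · exact absurd h hzy.ne'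
    · intro h; exact Or.inl (by simp [h])
  · intro x y hx hy
    simp only [dz, dist_comm x y, mul_comm (dist z x)]
  · intro x y w hx hy hw
    have hzx : 0 < dist z x := dist_pos.mpr hx.symm
    have hzy : 0 < dist z y := dist_pos.mpr hy.symm
    have hzw : 0 < dist z w := dist_pos.mpr hw.symm
    have h := hpt x y z w
    simp only [dz]
    rw [div_add_div _ _ (by positivity) (by positivity), div_le_div_iff₀ (by positivity) (by positivity)]
    rw [dist_comm x z, dist_comm y z, dist_comm y w] at h
    nlinarith [mul_le_mul_of_nonneg_right h (by positivity : (0:ℝ) ≤ dist z x * dist z w)]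
end

section
/- Let (X,d) be a metric space such that for every choice of z ∈ X the inversion d_z(x,y) = d(x,y)/(d(z,x)d(z,y)) satisfies the triangle inequality on X \ {z}. Then (X,d) is a Ptolemy metric space. Conversely, if (X,d) is Ptolemy, then for every z the inversion d_z satisfies the triangle inequality on X \ {z}. -/
private lemma inv_aux (a b c u v s : ℝ) (ha : 0 < a) (hb : 0 < b) (hc : 0 < c) :
    u / (a * b) ≤ v / (a * c) + s / (c * b) ↔ u * c ≤ v * b + s * a := by
  rw [div_add_div _ _ (by positivity) (by positivity),
    div_le_div_iff₀ (by positivity) (by positivity)]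
  constructor <;> intro h <;>
    nlinarith [mul_pos (mul_pos ha hb) hc, mul_pos ha hb, mul_pos hb hc, mul_pos ha hc]

/-- A metric space `(X,d)` is Ptolemy if and only if for every `z ∈ X` the inversion
`d_z(x,y) = d(x,y)/(d(z,x)·d(z,y))` satisfies the triangle inequality on `X \ {z}`. -/
theorem stmt_2 {X : Type*} [MetricSpace X] :
    (∀ z x y w : X, x ≠ z → y ≠ z → w ≠ z →
        dist x y / (dist z x * dist z y) ≤
          dist x w / (dist z x * dist z w) + dist w y / (dist z w * dist z y)) ↔
    (∀ x y z w : X, dist x y * dist z w ≤ dist x z * dist y w + dist x w * dist y z) := by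
  constructor
  · intro h x y z w
    by_cases hx : x = z
    · subst hx
      simp [dist_comm, mul_comm]
    by_cases hy : y = z
    · subst hy
      simp [dist_comm]
    by_cases hw : w = z
    · subst hw
      simp [dist_comm]
      positivity
    · have ha : 0 < dist z x := dist_pos.2 (Ne.symm hx)
      have hb : 0 < dist z y := dist_pos.2 (Ne.symm hy)
      have hc : 0 < dist z w := dist_pos.2 (Ne.symm hw)
      have key := (inv_aux _ _ _ _ _ _ ha hb hc).1 (h z x y w hx hy hw)
      rw [dist_comm z y, dist_comm z x, dist_comm w y] at key
      calc dist x y * dist z w ≤ dist x w * dist y z + dist y w * dist x z := key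
        _ = dist x z * dist y w + dist x w * dist y z := by ring
  · intro h z x y w hx hy hw
    have ha : 0 < dist z x := dist_pos.2 (Ne.symm hx)
    have hb : 0 < dist z y := dist_pos.2 (Ne.symm hy)
    have hc : 0 < dist z w := dist_pos.2 (Ne.symm hw)
    rw [inv_aux _ _ _ _ _ _ ha hb hc]
    have := h x y z w
    rw [dist_comm y z, dist_comm x z, dist_comm y w] at this
    linarith
end

section
/- Let (V, ‖·‖) be a normed real vector space which is a Ptolemy metric space, i.e. for all x,y,z,w ∈ V: ‖x−y‖·‖z−w‖ ≤ ‖x−z‖·‖y−w‖ + ‖x−w‖·‖y−z‖. Then the norm satisfies the parallelogram law, i.e. V is an inner product space. -/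
/-!
Ptolemy's inequality for the points `x, -x, y, -y` gives Day's inequality
`4 ‖x‖ ‖y‖ ≤ ‖x + y‖² + ‖x - y‖²`, and it suffices to show that this forces the norm of each
plane to be Euclidean. In coordinates, take a quadratic form `Q ≥ ‖·‖²` of minimal trace.
Minimality forces two independent contact points (points where `Q = ‖·‖²`), and Day's
inequality shows that with two contact points `u, w` with `Q u = Q w` also `u ± w` are contact
points. Normalising the bisectors of two contact points gives `Q`-orthonormal contact points
`c₁, c₂`; the angles `θ` for which `cos θ • c₁ + sin θ • c₂` is a contact point then form a
closed set that is closed under midpoints and contains the multiples of `π / 2`, so it is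
everything and `‖·‖² = Q`.
-/

open Metric Set Real

def quadForm (T : ℝ × ℝ × ℝ) (p : ℝ × ℝ) : ℝ :=
  T.1 * p.1 ^ 2 + 2 * T.2.1 * p.1 * p.2 + T.2.2 * p.2 ^ 2

def quadTrace (T : ℝ × ℝ × ℝ) : ℝ := T.1 + T.2.2

def cross (p q : ℝ × ℝ) : ℝ := p.1 * q.2 - p.2 * q.1

def IsQuadMajorant (n : ℝ × ℝ → ℝ) (T : ℝ × ℝ × ℝ) : Prop := ∀ p, n p ^ 2 ≤ quadForm T p

def contactSet (n : ℝ × ℝ → ℝ) (T : ℝ × ℝ × ℝ) : Set (ℝ × ℝ) := {p | n p ^ 2 = quadForm T p}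

theorem continuous_quadForm (T : ℝ × ℝ × ℝ) : Continuous (quadForm T) := by
  unfold quadForm; fun_prop

theorem continuous_quadForm_apply (p : ℝ × ℝ) : Continuous fun T => quadForm T p := by
  unfold quadForm; fun_prop

theorem quadForm_smul (T : ℝ × ℝ × ℝ) (c : ℝ) (p : ℝ × ℝ) :
    quadForm T (c • p) = c ^ 2 * quadForm T p := by
  simp only [quadForm, Prod.smul_fst, Prod.smul_snd, smul_eq_mul]; ring

theorem quadForm_add_add_quadForm_sub (T : ℝ × ℝ × ℝ) (p q : ℝ × ℝ) :
    quadForm T (p + q) + quadForm T (p - q) = 2 * quadForm T p + 2 * quadForm T q := by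
  simp only [quadForm, Prod.fst_add, Prod.snd_add, Prod.fst_sub, Prod.snd_sub]; ring

theorem quadForm_add_smul (T R : ℝ × ℝ × ℝ) (t : ℝ) (p : ℝ × ℝ) :
    quadForm (T + t • R) p = quadForm T p + t * quadForm R p := by
  simp only [quadForm, Prod.fst_add, Prod.snd_add, Prod.smul_fst, Prod.smul_snd, smul_eq_mul]
  ring

theorem continuous_quadTrace : Continuous quadTrace := by
  unfold quadTrace; fun_prop

theorem quadTrace_add_smul (T R : ℝ × ℝ × ℝ) (t : ℝ) :
    quadTrace (T + t • R) = quadTrace T + t * quadTrace R := by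
  simp only [quadTrace, Prod.fst_add, Prod.snd_add, Prod.smul_fst, Prod.smul_snd, smul_eq_mul]
  ring

/-- The bisectors `u + v`, `u - v` of two vectors of equal `Q`-length are `Q`-orthogonal. -/
theorem quadForm_smul_add_smul_of_quadForm_eq (T : ℝ × ℝ × ℝ) {u v : ℝ × ℝ}
    (huv : quadForm T u = quadForm T v) (s t a b : ℝ) :
    quadForm T (a • s • (u + v) + b • t • (u - v)) =
      a ^ 2 * (s ^ 2 * quadForm T (u + v)) + b ^ 2 * (t ^ 2 * quadForm T (u - v)) := by
  simp only [quadForm, Prod.fst_add, Prod.snd_add, Prod.fst_sub, Prod.snd_sub, Prod.smul_fst,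
    Prod.smul_snd, smul_eq_mul] at huv ⊢
  linear_combination (2 * a * b * s * t) * huv

theorem cross_smul_smul (s t : ℝ) (p q : ℝ × ℝ) :
    cross (s • p) (t • q) = s * t * cross p q := by
  simp only [cross, Prod.smul_fst, Prod.smul_snd, smul_eq_mul]; ring

theorem cross_add_sub (p q : ℝ × ℝ) : cross (p + q) (p - q) = -2 * cross p q := by
  simp only [cross, Prod.fst_add, Prod.snd_add, Prod.fst_sub, Prod.snd_sub]; ring

theorem exists_smul_add_smul_eq_of_cross_ne_zero {c₁ c₂ : ℝ × ℝ} (h : cross c₁ c₂ ≠ 0)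
    (p : ℝ × ℝ) : ∃ a b : ℝ, a • c₁ + b • c₂ = p := by
  refine ⟨cross p c₂ / cross c₁ c₂, cross c₁ p / cross c₁ c₂, ?_⟩
  unfold cross at h ⊢
  ext <;>
    simp only [Prod.fst_add, Prod.snd_add, Prod.smul_fst, Prod.smul_snd, smul_eq_mul] <;>
    rw [div_mul_eq_mul_div, div_mul_eq_mul_div, ← add_div, div_eq_iff h] <;> ring

theorem fst_sq_add_snd_sq_pos {p : ℝ × ℝ} (hp : p ≠ 0) : 0 < p.1 ^ 2 + p.2 ^ 2 := by
  rcases p with ⟨a, b⟩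
  by_cases ha : a = 0
  · have hb : b ≠ 0 := by rintro rfl; exact hp (by rw [ha]; rfl)
    dsimp only; positivity
  · dsimp only; positivity

theorem one_le_fst_sq_add_snd_sq {p : ℝ × ℝ} (hp : p ∈ sphere (0 : ℝ × ℝ) 1) :
    1 ≤ p.1 ^ 2 + p.2 ^ 2 := by
  rw [mem_sphere_zero_iff_norm, Prod.norm_def, Real.norm_eq_abs, Real.norm_eq_abs] at hp
  rcases max_choice |p.1| |p.2| with h | h <;> rw [h] at hp <;>
    nlinarith [sq_abs p.1, sq_abs p.2, sq_nonneg p.1, sq_nonneg p.2]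

theorem Icc_subset_of_isClosed_of_midpoint_mem {s : Set ℝ} (hs : IsClosed s) {δ : ℝ}
    (hmid : ∀ x ∈ s, ∀ y ∈ s, |x - y| < δ → (x + y) / 2 ∈ s) {a b : ℝ} (ha : a ∈ s)
    (hb : b ∈ s) (hab : b - a < δ) : Icc a b ⊆ s := by
  intro x hx
  by_contra hxs
  -- `(α, β)` is the gap of `s` around `x`; its midpoint lies in `s` yet inside the gap.
  set α := sSup (s ∩ Icc a x)
  set β := sInf (s ∩ Icc x b)
  have hα : α ∈ s ∩ Icc a x := (hs.inter isClosed_Icc).csSup_mem ⟨a, ha, le_rfl, hx.1⟩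
    (bddAbove_Icc.mono inter_subset_right)
  have hβ : β ∈ s ∩ Icc x b := (hs.inter isClosed_Icc).csInf_mem ⟨b, hb, hx.2, le_rfl⟩
    (bddBelow_Icc.mono inter_subset_right)
  have hαx : α < x := lt_of_le_of_ne hα.2.2 fun h => hxs (h ▸ hα.1)
  have hxβ : x < β := lt_of_le_of_ne hβ.2.1 fun h => hxs (h ▸ hβ.1)
  have hm := hmid α hα.1 β hβ.1 (by rw [abs_lt]; constructor <;> linarith [hα.2.1, hβ.2.2])
  rcases le_total ((α + β) / 2) x with h | h
  · have : (α + β) / 2 ≤ α :=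
      le_csSup (s := s ∩ Icc a x) (bddAbove_Icc.mono inter_subset_right)
        ⟨hm, by linarith [hα.2.1], h⟩
    linarith
  · have : β ≤ (α + β) / 2 :=
      csInf_le (s := s ∩ Icc x b) (bddBelow_Icc.mono inter_subset_right)
        ⟨hm, h, by linarith [hβ.2.2]⟩
    linarith

structure IsDayNorm (n : ℝ × ℝ → ℝ) : Prop where
  continuous : Continuous n
  map_smul : ∀ (c : ℝ) (p : ℝ × ℝ), n (c • p) = |c| * n p
  pos : ∀ p ≠ 0, 0 < n p
  four_mul_le : ∀ p q, 4 * n p * n q ≤ n (p + q) ^ 2 + n (p - q) ^ 2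

namespace IsDayNorm

variable {n : ℝ × ℝ → ℝ}

theorem map_zero (hn : IsDayNorm n) : n 0 = 0 := by
  simpa using hn.map_smul 0 0

theorem nonneg (hn : IsDayNorm n) (p : ℝ × ℝ) : 0 ≤ n p := by
  rcases eq_or_ne p 0 with rfl | hp
  · exact hn.map_zero.ge
  · exact (hn.pos p hp).le

theorem isQuadMajorant_of_forall_sphere (hn : IsDayNorm n) {T : ℝ × ℝ × ℝ}
    (h : ∀ p ∈ sphere (0 : ℝ × ℝ) 1, n p ^ 2 ≤ quadForm T p) : IsQuadMajorant n T := by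
  intro p
  rcases eq_or_ne p 0 with rfl | hp
  · simp [hn.map_zero, quadForm]
  · have hu : ‖p‖⁻¹ • p ∈ sphere (0 : ℝ × ℝ) 1 := by
      simp [norm_smul, norm_ne_zero_iff.2 hp]
    have := h _ hu
    rw [hn.map_smul, quadForm_smul, abs_of_pos (by positivity), mul_pow] at this
    exact le_of_mul_le_mul_left this (by positivity)

theorem exists_isQuadMajorant (hn : IsDayNorm n) : ∃ T, IsQuadMajorant n T := by
  obtain ⟨M, hM⟩ := (isCompact_sphere (0 : ℝ × ℝ) 1).exists_bound_of_continuousOn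
    (hn.continuous.pow 2).continuousOn
  refine ⟨(M, 0, M), hn.isQuadMajorant_of_forall_sphere fun p hp => ?_⟩
  have h1 := one_le_fst_sq_add_snd_sq hp
  have h2 : n p ^ 2 ≤ M := (le_abs_self _).trans (hM p hp)
  simp only [quadForm]
  nlinarith [sq_nonneg (n p)]

theorem exists_isQuadMajorant_forall_quadTrace_le (hn : IsDayNorm n) :
    ∃ T, IsQuadMajorant n T ∧ ∀ T', IsQuadMajorant n T' → quadTrace T ≤ quadTrace T' := by
  obtain ⟨T₀, hT₀⟩ := hn.exists_isQuadMajorant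
  set S := {T | IsQuadMajorant n T} ∩ {T | quadTrace T ≤ quadTrace T₀}
  have hclosed : IsClosed S := by
    refine IsClosed.inter ?_ (isClosed_le continuous_quadTrace continuous_const)
    simp only [IsQuadMajorant, ofPred_forall]
    exact isClosed_iInter fun p => isClosed_le continuous_const (continuous_quadForm_apply p)
  -- A majorant has `A, C ≥ 0` and `|2B| ≤ A + C`, so `S` is bounded.
  have hbdd : S ⊆ closedBall 0 (quadTrace T₀) := by
    rintro ⟨A, B, C⟩ ⟨hT, htr⟩
    replace hT : IsQuadMajorant n (A, B, C) := hT
    replace htr : A + C ≤ quadTrace T₀ := htr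
    have h10 := (sq_nonneg _).trans (hT (1, 0))
    have h01 := (sq_nonneg _).trans (hT (0, 1))
    have h11 := (sq_nonneg _).trans (hT (1, 1))
    have h1m := (sq_nonneg _).trans (hT (1, -1))
    simp only [quadForm, quadTrace] at h10 h01 h11 h1m htr
    simp only [mem_closedBall_zero_iff, norm_prod_le_iff, Real.norm_eq_abs, abs_le, quadTrace]
    refine ⟨⟨?_, ?_⟩, ⟨?_, ?_⟩, ?_, ?_⟩ <;> nlinarith
  obtain ⟨T, hTS, hTmin⟩ := (isCompact_closedBall _ _ |>.of_isClosed_subset hclosed hbdd)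
    |>.exists_isMinOn ⟨T₀, hT₀, le_refl (quadTrace T₀)⟩ continuous_quadTrace.continuousOn
  refine ⟨T, hTS.1, fun T' hT' => ?_⟩
  rcases le_total (quadTrace T') (quadTrace T₀) with h | h
  · exact hTmin ⟨hT', h⟩
  · exact hTS.2.trans h

theorem isClosed_contactSet (hn : IsDayNorm n) (T : ℝ × ℝ × ℝ) :
    IsClosed (contactSet n T) :=
  isClosed_eq (hn.continuous.pow 2) (continuous_quadForm T)

theorem smul_mem_contactSet (hn : IsDayNorm n) {T : ℝ × ℝ × ℝ} {p : ℝ × ℝ}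
    (hp : p ∈ contactSet n T) (c : ℝ) : c • p ∈ contactSet n T := by
  simp only [contactSet, mem_ofPred_eq, hn.map_smul, quadForm_smul, mul_pow, sq_abs] at hp ⊢
  rw [hp]

theorem quadForm_inv_smul (hn : IsDayNorm n) {T : ℝ × ℝ × ℝ} {p : ℝ × ℝ}
    (hp : p ∈ contactSet n T) (hp0 : p ≠ 0) : quadForm T ((n p)⁻¹ • p) = 1 := by
  rw [quadForm_smul, ← hp, inv_pow, inv_mul_cancel₀ (pow_ne_zero 2 (hn.pos p hp0).ne')]

theorem add_mem_contactSet_and_sub_mem (hn : IsDayNorm n) {T : ℝ × ℝ × ℝ}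
    (hT : IsQuadMajorant n T) {u w : ℝ × ℝ} (hu : u ∈ contactSet n T)
    (hw : w ∈ contactSet n T)
    (huw : quadForm T u = quadForm T w) :
    u + w ∈ contactSet n T ∧ u - w ∈ contactSet n T := by
  have hnuw : n u = n w := (sq_eq_sq₀ (hn.nonneg u) (hn.nonneg w)).1 (by rw [hu, hw, huw])
  have hpar := quadForm_add_add_quadForm_sub T u w
  have hday := hn.four_mul_le u w
  have hadd := hT (u + w)
  have hsub := hT (u - w)
  simp only [contactSet, mem_ofPred_eq] at hu hw ⊢
  rw [hnuw] at hday
  -- `4 n u n w ≤ n (u + w)² + n (u - w)² ≤ Q (u + w) + Q (u - w) = 2 Q u + 2 Q w = 4 n u n w`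
  constructor <;> nlinarith

theorem exists_isQuadMajorant_add_smul (hn : IsDayNorm n) {T R : ℝ × ℝ × ℝ}
    (hT : IsQuadMajorant n T)
    (hR : ∀ p ∈ sphere (0 : ℝ × ℝ) 1, p ∈ contactSet n T → 0 < quadForm R p) :
    ∃ t : ℝ, 0 < t ∧ IsQuadMajorant n (T + t • R) := by
  have hG : IsCompact (sphere (0 : ℝ × ℝ) 1 ∩ {p | quadForm R p ≤ 0}) :=
    (isCompact_sphere _ _).inter_right (isClosed_le (continuous_quadForm R) continuous_const)
  obtain ⟨η, hη, hηG⟩ := hG.exists_forall_le' (f := fun p => quadForm T p - n p ^ 2)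
    ((continuous_quadForm T).sub (hn.continuous.pow 2)).continuousOn (a := 0)
    fun p hp => sub_pos.2 <| (hT p).lt_of_ne fun h => (hR p hp.1 h).not_ge hp.2
  obtain ⟨K, hK⟩ := (isCompact_sphere (0 : ℝ × ℝ) 1).exists_bound_of_continuousOn
    (continuous_quadForm R).continuousOn
  refine ⟨η / (|K| + 1), by positivity, hn.isQuadMajorant_of_forall_sphere fun p hp => ?_⟩
  rw [quadForm_add_smul]
  rcases le_or_gt (quadForm R p) 0 with hRp | hRp
  · have hRK : -quadForm R p ≤ |K| + 1 := by
      linarith [neg_le_abs (quadForm R p), hK p hp, le_abs_self K,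
        Real.norm_eq_abs (quadForm R p)]
    have : -η ≤ η / (|K| + 1) * quadForm R p := by
      rw [div_mul_eq_mul_div, le_div_iff₀ (by positivity)]
      nlinarith
    linarith [hηG p ⟨hp, hRp⟩]
  · nlinarith [hT p, div_pos hη (by positivity : (0 : ℝ) < |K| + 1)]

/-- At a trace-minimal majorant, the contact set does not lie on a line: otherwise adding a
small multiple of `‖w‖²‖p‖² - 3 (w × p)²`, a form of negative trace positive along `w`, stays a
majorant. -/
theorem exists_mem_contactSet_cross_ne_zero (hn : IsDayNorm n) {T : ℝ × ℝ × ℝ}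
    (hT : IsQuadMajorant n T) (hmin : ∀ T', IsQuadMajorant n T' → quadTrace T ≤ quadTrace T')
    {w : ℝ × ℝ} (hw : w ≠ 0) :
    ∃ v ∈ contactSet n T, cross w v ≠ 0 := by
  by_contra! h
  set R : ℝ × ℝ × ℝ := (w.1 ^ 2 - 2 * w.2 ^ 2, 3 * w.1 * w.2, w.2 ^ 2 - 2 * w.1 ^ 2)
  have hR (p : ℝ × ℝ) :
      quadForm R p = (w.1 ^ 2 + w.2 ^ 2) * (p.1 ^ 2 + p.2 ^ 2) - 3 * cross w p ^ 2 := by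
    simp only [R, quadForm, cross]; ring
  obtain ⟨t, ht, hTt⟩ := hn.exists_isQuadMajorant_add_smul hT (R := R) fun p hp hpK => by
    have hp0 : p ≠ 0 := ne_of_mem_sphere hp one_ne_zero
    rw [hR, h p hpK]
    linarith [mul_pos (fst_sq_add_snd_sq_pos hw) (fst_sq_add_snd_sq_pos hp0)]
  have := hmin _ hTt
  rw [quadTrace_add_smul] at this
  simp only [quadTrace, R] at this
  nlinarith [fst_sq_add_snd_sq_pos hw]

theorem exists_orthonormal_mem_contactSet (hn : IsDayNorm n) {T : ℝ × ℝ × ℝ}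
    (hT : IsQuadMajorant n T) {w v : ℝ × ℝ} (hw : w ∈ contactSet n T)
    (hv : v ∈ contactSet n T) (hwv : cross w v ≠ 0) :
    ∃ c₁ ∈ contactSet n T, ∃ c₂ ∈ contactSet n T, cross c₁ c₂ ≠ 0 ∧
      ∀ a b : ℝ, quadForm T (a • c₁ + b • c₂) = a ^ 2 + b ^ 2 := by
  have ne_zero_of_cross {p q : ℝ × ℝ} (h : cross p q ≠ 0) : p ≠ 0 ∧ q ≠ 0 := by
    constructor <;> rintro rfl <;> simp [cross] at h
  set u := (n w)⁻¹ • w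
  set u' := (n v)⁻¹ • v
  have huu' : cross u u' ≠ 0 := by
    rw [cross_smul_smul]
    have := hn.pos w (ne_zero_of_cross hwv).1
    have := hn.pos v (ne_zero_of_cross hwv).2
    positivity
  have hQu : quadForm T u = quadForm T u' := by
    rw [hn.quadForm_inv_smul hw (ne_zero_of_cross hwv).1,
      hn.quadForm_inv_smul hv (ne_zero_of_cross hwv).2]
  obtain ⟨hadd, hsub⟩ := hn.add_mem_contactSet_and_sub_mem hT (hn.smul_mem_contactSet hw _)
    (hn.smul_mem_contactSet hv _) hQu
  have hcross : cross (u + u') (u - u') ≠ 0 := by rw [cross_add_sub]; simpa using huu'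
  obtain ⟨hadd0, hsub0⟩ := ne_zero_of_cross hcross
  refine ⟨_, hn.smul_mem_contactSet hadd (n (u + u'))⁻¹,
    _, hn.smul_mem_contactSet hsub (n (u - u'))⁻¹, ?_, fun a b => ?_⟩
  · rw [cross_smul_smul]
    have := hn.pos _ hadd0
    have := hn.pos _ hsub0
    positivity
  · rw [quadForm_smul_add_smul_of_quadForm_eq T hQu, ← quadForm_smul T _ (u + u'),
      ← quadForm_smul T _ (u - u'),
      hn.quadForm_inv_smul hadd hadd0, hn.quadForm_inv_smul hsub hsub0, mul_one, mul_one]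

theorem cos_smul_add_sin_smul_midpoint_mem_contactSet (hn : IsDayNorm n) {T : ℝ × ℝ × ℝ}
    (hT : IsQuadMajorant n T) {c₁ c₂ : ℝ × ℝ}
    (horth : ∀ a b : ℝ, quadForm T (a • c₁ + b • c₂) = a ^ 2 + b ^ 2) {x y : ℝ}
    (hx : cos x • c₁ + sin x • c₂ ∈ contactSet n T)
    (hy : cos y • c₁ + sin y • c₂ ∈ contactSet n T)
    (hxy : |x - y| < π) :
    cos ((x + y) / 2) • c₁ + sin ((x + y) / 2) • c₂ ∈ contactSet n T := by
  have hcos : 0 < cos ((x - y) / 2) := cos_pos_of_mem_Ioo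
    ⟨by linarith [(abs_lt.1 hxy).1], by linarith [(abs_lt.1 hxy).2]⟩
  have hsum : cos x • c₁ + sin x • c₂ + (cos y • c₁ + sin y • c₂) =
      (2 * cos ((x - y) / 2)) • (cos ((x + y) / 2) • c₁ + sin ((x + y) / 2) • c₂) := by
    linear_combination (norm := module) cos_add_cos x y • c₁ + sin_add_sin x y • c₂
  have := hn.smul_mem_contactSet (hn.add_mem_contactSet_and_sub_mem hT hx hy
    (by simp only [horth, cos_sq_add_sin_sq])).1 (2 * cos ((x - y) / 2))⁻¹
  rwa [hsum, inv_smul_smul₀ (by positivity)] at this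

theorem smul_add_smul_mem_contactSet (hn : IsDayNorm n) {T : ℝ × ℝ × ℝ}
    (hT : IsQuadMajorant n T) {c₁ c₂ : ℝ × ℝ} (hc₁ : c₁ ∈ contactSet n T)
    (hc₂ : c₂ ∈ contactSet n T)
    (horth : ∀ a b : ℝ, quadForm T (a • c₁ + b • c₂) = a ^ 2 + b ^ 2) (a b : ℝ) :
    a • c₁ + b • c₂ ∈ contactSet n T := by
  set e : ℝ → ℝ × ℝ := fun θ => cos θ • c₁ + sin θ • c₂
  set s := e ⁻¹' contactSet n T
  have hs : IsClosed s := (hn.isClosed_contactSet T).preimage (by fun_prop)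
  have hmid : ∀ x ∈ s, ∀ y ∈ s, |x - y| < π → (x + y) / 2 ∈ s := fun x hx y hy hxy =>
    hn.cos_smul_add_sin_smul_midpoint_mem_contactSet hT horth hx hy hxy
  have he : ∀ θ, θ ∈ ({-π, -(π / 2), 0, π / 2, π} : Set ℝ) → θ ∈ s := by
    have hneg (p : ℝ × ℝ) (hp : p ∈ contactSet n T) : -p ∈ contactSet n T := by
      simpa using hn.smul_mem_contactSet hp (-1)
    rintro θ (rfl | rfl | rfl | rfl | rfl) <;>
      simp [s, e, hc₁, hc₂, hneg]
  have quarter : ∀ x y, x ∈ s → y ∈ s → y - x = π / 2 → Icc x y ⊆ s :=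
    fun x y hx hy hxy =>
      Icc_subset_of_isClosed_of_midpoint_mem hs hmid hx hy (by linarith [pi_pos])
  have hIcc : Icc (-π) π ⊆ s := by
    rintro θ ⟨h₁, h₂⟩
    rcases le_total θ (-(π / 2)) with h₃ | h₃
    · exact quarter _ _ (he _ (by simp)) (he _ (by simp)) (by ring) ⟨h₁, h₃⟩
    rcases le_total θ 0 with h₄ | h₄
    · exact quarter _ _ (he _ (by simp)) (he _ (by simp)) (by ring) ⟨h₃, h₄⟩
    rcases le_total θ (π / 2) with h₅ | h₅
    · exact quarter _ _ (he _ (by simp)) (he _ (by simp)) (by ring) ⟨h₄, h₅⟩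
    · exact quarter _ _ (he _ (by simp)) (he _ (by simp)) (by ring) ⟨h₅, h₂⟩
  set z : ℂ := ⟨a, b⟩
  have hz : a • c₁ + b • c₂ = ‖z‖ • e (Complex.arg z) := by
    simp only [e, smul_add, smul_smul, Complex.norm_mul_cos_arg, Complex.norm_mul_sin_arg, z]
  rw [hz]
  exact hn.smul_mem_contactSet
    (hIcc ⟨(Complex.neg_pi_lt_arg z).le, Complex.arg_le_pi z⟩) _

theorem exists_sq_eq_quadForm (hn : IsDayNorm n) : ∃ T, ∀ p, n p ^ 2 = quadForm T p := by
  obtain ⟨T, hT, hmin⟩ := hn.exists_isQuadMajorant_forall_quadTrace_le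
  obtain ⟨w, hw, hw0⟩ :=
    hn.exists_mem_contactSet_cross_ne_zero hT hmin (w := (1, 0)) (by simp)
  obtain ⟨v, hv, hwv⟩ := hn.exists_mem_contactSet_cross_ne_zero hT hmin (w := w)
    (by rintro rfl; simp [cross] at hw0)
  obtain ⟨c₁, hc₁, c₂, hc₂, hc, horth⟩ := hn.exists_orthonormal_mem_contactSet hT hw hv hwv
  refine ⟨T, fun p => ?_⟩
  obtain ⟨a, b, rfl⟩ := exists_smul_add_smul_eq_of_cross_ne_zero hc p
  exact hn.smul_add_smul_mem_contactSet hT hc₁ hc₂ horth a b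

theorem parallelogram (hn : IsDayNorm n) (p q : ℝ × ℝ) :
    n (p + q) ^ 2 + n (p - q) ^ 2 = 2 * n p ^ 2 + 2 * n q ^ 2 := by
  obtain ⟨T, hT⟩ := hn.exists_sq_eq_quadForm
  simp only [hT, quadForm_add_add_quadForm_sub]

end IsDayNorm

section NormedSpace

variable {V : Type*} [NormedAddCommGroup V] [NormedSpace ℝ V]

theorem four_mul_norm_mul_norm_le_of_ptolemy
    (hpt : ∀ x y z w : V, ‖x - y‖ * ‖z - w‖ ≤ ‖x - z‖ * ‖y - w‖ + ‖x - w‖ * ‖y - z‖) (a b : V) :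
    4 * ‖a‖ * ‖b‖ ≤ ‖a + b‖ ^ 2 + ‖a - b‖ ^ 2 := by
  have h := hpt a (-a) b (-b)
  rw [show a - -a = (2 : ℝ) • a by module, show b - -b = (2 : ℝ) • b by module,
    show -a - -b = -(a - b) by module, show a - -b = a + b by module,
    show -a - b = -(a + b) by module, norm_neg, norm_neg, norm_smul, norm_smul,
    Real.norm_two] at h
  nlinarith

theorem isDayNorm_norm_comp
    (hV : ∀ a b : V, 4 * ‖a‖ * ‖b‖ ≤ ‖a + b‖ ^ 2 + ‖a - b‖ ^ 2)
    {L : ℝ × ℝ →ₗ[ℝ] V} (hL : Function.Injective L) : IsDayNorm fun p => ‖L p‖ where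
  continuous := L.continuous_of_finiteDimensional.norm
  map_smul c p := by rw [map_smul, norm_smul, Real.norm_eq_abs]
  pos p hp := norm_pos_iff.2 fun h => hp (hL (h.trans L.map_zero.symm))
  four_mul_le p q := by simpa only [map_add, map_sub] using hV (L p) (L q)

theorem parallelogram_law_of_smul_add_smul_eq_zero {x y : V} {s t : ℝ}
    (h : s • x + t • y = 0) (hst : (s, t) ≠ 0) :
    ‖x + y‖ ^ 2 + ‖x - y‖ ^ 2 = 2 * ‖x‖ ^ 2 + 2 * ‖y‖ ^ 2 := by
  obtain ⟨z, a, b, rfl, rfl⟩ : ∃ z : V, ∃ a b : ℝ, x = a • z ∧ y = b • z := by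
    rcases eq_or_ne t 0 with rfl | ht
    · have hs : s ≠ 0 := by simpa using hst
      exact ⟨y, 0, 1, by simpa [hs] using h, (one_smul ℝ y).symm⟩
    · refine ⟨x, 1, -(s / t), (one_smul ℝ x).symm, ?_⟩
      calc y = t⁻¹ • (t • y) := (inv_smul_smul₀ ht y).symm
        _ = t⁻¹ • -(s • x) := by rw [eq_neg_of_add_eq_zero_right h]
        _ = -(s / t) • x := by module
  simp only [← add_smul, ← sub_smul, norm_smul, mul_pow, Real.norm_eq_abs, sq_abs]
  ring

end NormedSpace

/-- Schoenberg's theorem: a normed real vector space satisfying the Ptolemy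
inequality satisfies the parallelogram law, i.e. it is an inner product space. -/
theorem stmt_9 {V : Type*} [NormedAddCommGroup V] [NormedSpace ℝ V]
    (hpt : ∀ x y z w : V, ‖x - y‖ * ‖z - w‖ ≤ ‖x - z‖ * ‖y - w‖ + ‖x - w‖ * ‖y - z‖) :
    ∀ x y : V, ‖x + y‖ ^ 2 + ‖x - y‖ ^ 2 = 2 * ‖x‖ ^ 2 + 2 * ‖y‖ ^ 2 := by
  intro x y
  set L := (LinearMap.toSpanSingleton ℝ V x).coprod (LinearMap.toSpanSingleton ℝ V y)
  have hL (p : ℝ × ℝ) : L p = p.1 • x + p.2 • y := by simp [L]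
  by_cases hinj : Function.Injective L
  · have := (isDayNorm_norm_comp (four_mul_norm_mul_norm_le_of_ptolemy hpt) hinj).parallelogram
      (1, 0) (0, 1)
    simpa [hL, sub_eq_add_neg] using this
  · obtain ⟨⟨s, t⟩, hst, hst0⟩ : ∃ p, L p = 0 ∧ p ≠ 0 := by
      simpa [injective_iff_map_eq_zero] using hinj
    exact parallelogram_law_of_smul_add_smul_eq_zero (by rwa [hL] at hst) hst0
end

section
/- In a geodesic Ptolemy metric space (X,d), every distance function d(z,·) is midpoint-convex along geodesics: if m is a midpoint of x and y (i.e. d(x,m) = d(m,y) = d(x,y)/2), then d(z,m) ≤ (d(z,x) + d(z,y))/2. -/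
/-- In a geodesic Ptolemy metric space, distance functions are midpoint-convex:
if `m` is a midpoint of `x` and `y`, then `d(z,m) ≤ (d(z,x)+d(z,y))/2`. -/
theorem stmt_10 {X : Type*} [MetricSpace X]
    (hgeo : ∀ x y : X, ∃ f : ℝ → X, f 0 = x ∧ f (dist x y) = y ∧
      ∀ s t : ℝ, s ∈ Set.Icc 0 (dist x y) → t ∈ Set.Icc 0 (dist x y) →
        dist (f s) (f t) = |s - t|)
    (hpt : ∀ x y z w : X, dist x y * dist z w ≤ dist x z * dist y w + dist x w * dist y z)
    (z x y m : X) (hxm : dist x m = dist x y / 2) (hmy : dist m y = dist x y / 2) :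
    dist z m ≤ (dist z x + dist z y) / 2 := by
  rcases eq_or_lt_of_le (dist_nonneg (x := x) (y := y)) with h0 | hpos
  · have hxm0 : dist x m = 0 := by rw [hxm, ← h0]; ring
    have : x = m := by rwa [dist_eq_zero] at hxm0
    subst this
    have hzy : dist z x ≤ dist z y := by
      calc dist z x ≤ dist z y + dist y x := dist_triangle _ _ _
        _ = dist z y := by rw [dist_comm y x, ← h0]; ring
    linarith
  · have key := hpt x y z m
    rw [dist_comm y m, hxm, hmy, dist_comm x z, dist_comm y z] at key
    have : dist x y * dist z m ≤ dist x y * ((dist z x + dist z y) / 2) := by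
      nlinarith
    exact le_of_mul_le_mul_left this hpos
end

section
/- Let (X,d) be a Ptolemy metric space, σ ⊂ X a Ptolemy circle, and ω ∈ σ. Then in the inverted metric d_ω (with remote point ω), the set σ \ {ω} is a geodesic: for any three points x, y, z ∈ σ \ {ω} lying on σ in this order, d_ω(x,y) + d_ω(y,z) = d_ω(x,z). -/
theorem dist_div_add_dist_div_of_ptolemy_eq {X : Type*} [MetricSpace X] {ω x y z : X}
    (hx : x ≠ ω) (hy : y ≠ ω) (hz : z ≠ ω)
    (h : dist ω y * dist x z = dist ω x * dist y z + dist ω z * dist x y) :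
    dist x y / (dist ω x * dist ω y) + dist y z / (dist ω y * dist ω z) =
      dist x z / (dist ω x * dist ω z) := by
  have hωx : dist ω x ≠ 0 := dist_ne_zero.mpr hx.symm
  have hωy : dist ω y ≠ 0 := dist_ne_zero.mpr hy.symm
  have hωz : dist ω z ≠ 0 := dist_ne_zero.mpr hz.symm
  field_simp
  linear_combination -h

theorem stmt_11_general {X : Type*} [MetricSpace X]
    (γ : ℝ → X)
    (hcirc : ∀ t₁ t₂ t₃ t₄ : ℝ, t₁ ≤ t₂ → t₂ ≤ t₃ → t₃ ≤ t₄ → t₄ ≤ t₁ + 1 →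
      dist (γ t₁) (γ t₃) * dist (γ t₂) (γ t₄) =
        dist (γ t₁) (γ t₂) * dist (γ t₃) (γ t₄) + dist (γ t₁) (γ t₄) * dist (γ t₂) (γ t₃))
    (ω : X) :
    ∀ t₀ t₁ t₂ t₃ : ℝ, γ t₀ = ω → t₀ ≤ t₁ → t₁ ≤ t₂ → t₂ ≤ t₃ → t₃ ≤ t₀ + 1 →
      γ t₁ ≠ ω → γ t₂ ≠ ω → γ t₃ ≠ ω →
      dist (γ t₁) (γ t₂) / (dist ω (γ t₁) * dist ω (γ t₂)) +
        dist (γ t₂) (γ t₃) / (dist ω (γ t₂) * dist ω (γ t₃)) =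
      dist (γ t₁) (γ t₃) / (dist ω (γ t₁) * dist ω (γ t₃)) := by
  intro t₀ t₁ t₂ t₃ hω h₀₁ h₁₂ h₂₃ h₃₀ h₁ h₂ h₃
  have hptolemy := hcirc t₀ t₁ t₂ t₃ h₀₁ h₁₂ h₂₃ h₃₀
  rw [hω] at hptolemy
  exact dist_div_add_dist_div_of_ptolemy_eq h₁ h₂ h₃ hptolemy

/-- If `σ` is a Ptolemy circle in a Ptolemy metric space `X` (given by a continuous
parameterization `γ` of period 1, injective on a period, satisfying the Ptolemy
equality on cyclically ordered quadruples) and `ω ∈ σ`, then in the inverted metric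
`d_ω` the set `σ \ {ω}` is a geodesic: for `x, y, z ∈ σ \ {ω}` in order on `σ`,
`d_ω(x,y) + d_ω(y,z) = d_ω(x,z)`. -/
theorem stmt_11 {X : Type*} [MetricSpace X]
    (hpt : ∀ x y z w : X, dist x y * dist z w ≤ dist x z * dist y w + dist x w * dist y z)
    (σ : Set X) (γ : ℝ → X)
    (hcont : Continuous γ) (hper : ∀ t, γ (t + 1) = γ t)
    (hinj : ∀ s t : ℝ, s ∈ Set.Ico (0:ℝ) 1 → t ∈ Set.Ico (0:ℝ) 1 → γ s = γ t → s = t)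
    (hrange : Set.range γ = σ)
    (hcirc : ∀ t₁ t₂ t₃ t₄ : ℝ, t₁ ≤ t₂ → t₂ ≤ t₃ → t₃ ≤ t₄ → t₄ ≤ t₁ + 1 →
      dist (γ t₁) (γ t₃) * dist (γ t₂) (γ t₄) =
        dist (γ t₁) (γ t₂) * dist (γ t₃) (γ t₄) + dist (γ t₁) (γ t₄) * dist (γ t₂) (γ t₃))
    (ω : X) (hω : ω ∈ σ) :
    ∀ t₀ t₁ t₂ t₃ : ℝ, γ t₀ = ω → t₀ ≤ t₁ → t₁ ≤ t₂ → t₂ ≤ t₃ → t₃ ≤ t₀ + 1 →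
      γ t₁ ≠ ω → γ t₂ ≠ ω → γ t₃ ≠ ω →
      dist (γ t₁) (γ t₂) / (dist ω (γ t₁) * dist ω (γ t₂)) +
        dist (γ t₂) (γ t₃) / (dist ω (γ t₂) * dist ω (γ t₃)) =
      dist (γ t₁) (γ t₃) / (dist ω (γ t₁) * dist ω (γ t₃)) :=
  stmt_11_general γ hcirc ω
end

section
/- Let C and C' be Ptolemy circles and let x₁,x₂,x₃ ∈ C and x₁',x₂',x₃' ∈ C' be triples of distinct points. Then there exists a unique Möbius homeomorphism φ: C → C' with φ(xᵢ) = xᵢ' for i = 1,2,3. -/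
/-!
Inverting a Ptolemy circle at a point `ω` turns it into a line. For `x, y ≠ ω` put
`invDist ω x y = d(x,y) / (d(x,ω) d(y,ω))`. The Ptolemy equality for a cyclically ordered
quadruple starting at `ω` says exactly that `invDist ω` is additive along the circle, so a signed
version of it is an isometry `g` of `(X ∖ {ω}, invDist ω)` onto `ℝ`.

Take `ω = x₃` and `ω' = x₃'`. The required map `φ` sends `x₃` to `x₃'` and is, in these coordinates,
the affine map of `ℝ` matching `g x₁, g x₂` with `g' x₁', g' x₂'`. An affine map multiplies the
inverted distance by a constant, which amounts to `d(φ x, φ y) = ρ x · ρ y · d(x, y)` for a positive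
function `ρ`; this makes `φ` Möbius, and continuous because `C'` is bounded. Conversely, a Möbius
map sending `x₃` to `x₃'` multiplies inverted distances by a constant, so the image of each point
has prescribed distances in the line `C' ∖ {x₃'}` from the two points `x₁'` and `x₂'`, which
determines it.
-/

/-- A map between metric spaces is Möbius if it is injective and preserves the
cross-ratio triple of every quadruple (stated via cross-multiplication of the
projective coordinates). -/
def IsMoebiusMap {C C' : Type*} [MetricSpace C] [MetricSpace C'] (φ : C → C') : Prop :=
  Function.Injective φ ∧
  ∀ a b c e : C,
    (dist a b * dist c e) * (dist (φ a) (φ c) * dist (φ b) (φ e)) =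
      (dist (φ a) (φ b) * dist (φ c) (φ e)) * (dist a c * dist b e) ∧
    (dist a c * dist b e) * (dist (φ a) (φ e) * dist (φ b) (φ c)) =
      (dist (φ a) (φ c) * dist (φ b) (φ e)) * (dist a e * dist b c) ∧
    (dist a b * dist c e) * (dist (φ a) (φ e) * dist (φ b) (φ c)) =
      (dist (φ a) (φ b) * dist (φ c) (φ e)) * (dist a e * dist b c)

open Set Filter Topology

theorem eq_of_abs_sub_eq_of_abs_sub_eq {p q s t : ℝ} (hpq : p ≠ q) (hp : |p - s| = |p - t|)
    (hq : |q - s| = |q - t|) : s = t := by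
  rcases abs_eq_abs.1 hp with hp | hp
  · linarith
  rcases abs_eq_abs.1 hq with hq | hq
  · linarith
  exact absurd (by linarith) hpq

section InvDist

variable {X : Type*} [MetricSpace X]

/-- The distance on `X ∖ {ω}` obtained by inverting at `ω` (it is `0` when `x` or `y` is `ω`). -/
noncomputable def invDist (ω x y : X) : ℝ := dist x y / (dist x ω * dist y ω)

variable {ω x y z : X}

theorem invDist_comm (ω x y : X) : invDist ω x y = invDist ω y x := by
  rw [invDist, invDist, dist_comm, mul_comm]

theorem invDist_self (ω x : X) : invDist ω x x = 0 := by simp [invDist]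

theorem invDist_nonneg (ω x y : X) : 0 ≤ invDist ω x y := by
  unfold invDist
  positivity

theorem invDist_pos (hx : x ≠ ω) (hy : y ≠ ω) (hxy : x ≠ y) : 0 < invDist ω x y :=
  div_pos (dist_pos.2 hxy) (mul_pos (dist_pos.2 hx) (dist_pos.2 hy))

theorem invDist_mul_dist_mul_dist (hx : x ≠ ω) (hy : y ≠ ω) :
    invDist ω x y * (dist x ω * dist y ω) = dist x y :=
  div_mul_cancel₀ _ (mul_pos (dist_pos.2 hx) (dist_pos.2 hy)).ne'

theorem invDist_add_of_ptolemy (hx : x ≠ ω) (hy : y ≠ ω) (hz : z ≠ ω)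
    (h : dist ω y * dist x z = dist ω x * dist y z + dist ω z * dist x y) :
    invDist ω x z = invDist ω x y + invDist ω y z := by
  have := dist_pos.2 hx
  have := dist_pos.2 hy
  have := dist_pos.2 hz
  unfold invDist
  rw [dist_comm ω x, dist_comm ω y, dist_comm ω z] at h
  field_simp
  linear_combination h

theorem continuousAt_invDist (hx : x ≠ ω) (hy : y ≠ ω) : ContinuousAt (invDist ω x) y :=
  (continuous_const.dist continuous_id).continuousAt.div
    (continuous_const.mul (continuous_id.dist continuous_const)).continuousAt
    (mul_pos (dist_pos.2 hx) (dist_pos.2 hy)).ne'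

theorem tendsto_invDist_atTop {α : Type*} {l : Filter α} {f : α → X} (hx : x ≠ ω)
    (hf : Tendsto f l (𝓝 ω)) (hfω : ∀ᶠ i in l, f i ≠ ω) :
    Tendsto (fun i => invDist ω x (f i)) l atTop := by
  have hω : 0 < dist x ω := dist_pos.2 hx
  have hnum : Tendsto (fun i => dist x (f i) / dist x ω) l (𝓝 1) := by
    simpa [hω.ne'] using ((tendsto_const_nhds (x := x)).dist hf).div_const (dist x ω)
  have hden : Tendsto (fun i => dist (f i) ω) l (𝓝[>] 0) :=
    tendsto_nhdsWithin_iff.2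
      ⟨by simpa using hf.dist (tendsto_const_nhds (x := ω)), hfω.mono fun _ => dist_pos.2⟩
  refine (hnum.pos_mul_atTop one_pos (tendsto_inv_nhdsGT_zero.comp hden)).congr fun i => ?_
  simp only [Function.comp_apply, invDist]
  ring

end InvDist

section Moebius

variable {X Y : Type*} [MetricSpace X] [MetricSpace Y]

theorem IsMoebiusMap.of_dist_eq_mul {f : X → Y} {ρ : X → ℝ} (hρ : ∀ x, 0 < ρ x)
    (hf : ∀ x y, dist (f x) (f y) = ρ x * ρ y * dist x y) : IsMoebiusMap f := by
  refine ⟨fun x y hxy => ?_, fun a b c e => ⟨?_, ?_, ?_⟩⟩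
  · have h := hf x y
    rw [hxy, dist_self] at h
    exact dist_eq_zero.1 ((mul_eq_zero.1 h.symm).resolve_left (mul_pos (hρ x) (hρ y)).ne')
  all_goals
    simp only [hf]
    ring

theorem continuous_of_dist_eq_mul [BoundedSpace Y] [Nontrivial X] {f : X → Y} {ρ : X → ℝ}
    (hρ : ∀ x, 0 < ρ x) (hf : ∀ x y, dist (f x) (f y) = ρ x * ρ y * dist x y) : Continuous f := by
  refine continuous_iff_continuousAt.2 fun x => ?_
  obtain ⟨r, hr⟩ := exists_ne x
  set K := Metric.diam (univ : Set Y)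
  -- comparing with the fixed point `r` bounds `ρ y` for `y` away from `r`
  have hbound : ∀ y ≠ r, dist (f y) (f x) ≤ ρ x * K * dist y x / (ρ r * dist y r) := by
    intro y hy
    have := hρ r
    have := dist_pos.2 hy
    rw [le_div_iff₀ (by positivity)]
    calc dist (f y) (f x) * (ρ r * dist y r) = ρ x * dist y x * dist (f y) (f r) := by
          rw [hf, hf]; ring
      _ ≤ ρ x * dist y x * K := mul_le_mul_of_nonneg_left
          (Metric.dist_le_diam_of_mem (Bornology.isBounded_univ.2 ‹_›) (mem_univ _) (mem_univ _))
          (mul_nonneg (hρ x).le dist_nonneg)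
      _ = ρ x * K * dist y x := by ring
  have hlim : Tendsto (fun y => ρ x * K * dist y x / (ρ r * dist y r)) (𝓝 x) (𝓝 0) := by
    simpa [Pi.div_def] using ((tendsto_const_nhds (x := ρ x * K)).mul
      (tendsto_id.dist (tendsto_const_nhds (x := x)))).div
      ((tendsto_const_nhds (x := ρ r)).mul (tendsto_id.dist (tendsto_const_nhds (x := r))))
      (mul_pos (hρ r) (dist_pos.2 hr.symm)).ne'
  rw [ContinuousAt, tendsto_iff_dist_tendsto_zero]
  refine squeeze_zero' (Eventually.of_forall fun _ => dist_nonneg) ?_ hlim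
  filter_upwards [isOpen_ne.mem_nhds hr.symm] with y hy using hbound y hy

theorem IsMoebiusMap.invDist_mul_invDist {f : X → Y} (hf : IsMoebiusMap f) {ω p q r : X}
    (hp : p ≠ ω) (hq : q ≠ ω) (hr : r ≠ ω) :
    invDist ω p q * invDist (f ω) (f q) (f r) = invDist (f ω) (f p) (f q) * invDist ω q r := by
  have hne : ∀ {x}, x ≠ ω → 0 < dist (f x) (f ω) := fun hx => dist_pos.2 (hx ∘ @hf.1 _ _)
  have := dist_pos.2 hp
  have := dist_pos.2 hq
  have := dist_pos.2 hr
  have := hne hp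
  have := hne hq
  have := hne hr
  have h := (hf.2 p q ω r).1
  rw [dist_comm ω r, dist_comm (f ω) (f r)] at h
  unfold invDist
  field_simp
  linear_combination h

end Moebius

section LineCoordinate

variable {X Y : Type*} [MetricSpace X] [MetricSpace Y]

structure IsLineCoordinate (ω : X) (g : X → ℝ) : Prop where
  invDist_eq : ∀ ⦃x y⦄, x ≠ ω → y ≠ ω → invDist ω x y = |g x - g y|
  exists_eq : ∀ u : ℝ, ∃ x, x ≠ ω ∧ g x = u

namespace IsLineCoordinate

variable {ω x y : X} {g : X → ℝ} {ω' : Y} {g' : Y → ℝ}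

theorem eq_of_apply_eq (hg : IsLineCoordinate ω g) (hx : x ≠ ω) (hy : y ≠ ω) (h : g x = g y) :
    x = y := by
  by_contra hxy
  have := hg.invDist_eq hx hy
  rw [h, sub_self, abs_zero] at this
  exact (invDist_pos hx hy hxy).ne' this

theorem exists_map {α : Type*} (hg' : IsLineCoordinate ω' g') (a : α) (h : α → ℝ) :
    ∃ f : α → Y, f a = ω' ∧ ∀ x ≠ a, f x ≠ ω' ∧ g' (f x) = h x := by
  classical
  choose F hFω hF using hg'.exists_eq
  exact ⟨fun x => if x = a then ω' else F (h x), by simp,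
    fun x hx => by simpa [hx] using ⟨hFω (h x), hF (h x)⟩⟩

theorem surjective_of_affine (hg : IsLineCoordinate ω g) (hg' : IsLineCoordinate ω' g')
    {f : X → Y} {a b : ℝ} (ha : a ≠ 0) (hfω : f ω = ω')
    (hf : ∀ x ≠ ω, f x ≠ ω' ∧ g' (f x) = a * g x + b) : Function.Surjective f := by
  intro y
  by_cases hy : y = ω'
  · exact ⟨ω, hfω.trans hy.symm⟩
  obtain ⟨x, hx, hgx⟩ := hg.exists_eq ((g' y - b) / a)
  refine ⟨x, hg'.eq_of_apply_eq (hf x hx).1 hy ?_⟩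
  rw [(hf x hx).2, hgx]
  field_simp
  ring

theorem exists_dist_eq_mul_of_affine (hg : IsLineCoordinate ω g)
    (hg' : IsLineCoordinate ω' g') {f : X → Y} {a b : ℝ} (ha : a ≠ 0) (hfω : f ω = ω')
    (hf : ∀ x ≠ ω, f x ≠ ω' ∧ g' (f x) = a * g x + b) :
    ∃ ρ : X → ℝ, (∀ x, 0 < ρ x) ∧ ∀ x y, dist (f x) (f y) = ρ x * ρ y * dist x y := by
  classical
  set s := √|a|
  have hs : 0 < s := Real.sqrt_pos.2 (abs_pos.2 ha)
  have hs2 : s * s = |a| := Real.mul_self_sqrt (abs_nonneg a)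
  set ρ : X → ℝ := fun x => if x = ω then s⁻¹ else s * dist (f x) ω' / dist x ω
  have hρ : ∀ x ≠ ω, ρ x = s * dist (f x) ω' / dist x ω := fun x hx => if_neg hx
  have hρω : ρ ω = s⁻¹ := if_pos rfl
  have key : ∀ x y, x ≠ ω → dist (f x) (f y) = ρ x * ρ y * dist x y := by
    intro x y hx
    have := dist_pos.2 hx
    have := dist_pos.2 (hf x hx).1
    by_cases hy : y = ω
    · rw [hy, hfω, hρ x hx, hρω]
      field_simp
    have := dist_pos.2 hy
    have := dist_pos.2 (hf y hy).1
    rw [← invDist_mul_dist_mul_dist (hf x hx).1 (hf y hy).1, ← invDist_mul_dist_mul_dist hx hy,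
      hg'.invDist_eq (hf x hx).1 (hf y hy).1, hg.invDist_eq hx hy, (hf x hx).2, (hf y hy).2,
      show a * g x + b - (a * g y + b) = a * (g x - g y) by ring, abs_mul, ← hs2, hρ x hx, hρ y hy]
    field_simp
  refine ⟨ρ, fun x => ?_, fun x y => ?_⟩
  · by_cases hx : x = ω
    · rw [hx, hρω]
      positivity
    · have := dist_pos.2 hx
      have := dist_pos.2 (hf x hx).1
      rw [hρ x hx]
      positivity
  by_cases hx : x = ω
  · by_cases hy : y = ω
    · simp [hx, hy]
    · rw [dist_comm, key y x hy, dist_comm y x]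
      ring
  · exact key x y hx

theorem eq_of_isMoebiusMap (hg' : IsLineCoordinate ω' g') {ψ₁ ψ₂ : X → Y} (h₁ : IsMoebiusMap ψ₁)
    (h₂ : IsMoebiusMap ψ₂) {x₁ x₂ : X} (hx₁ : x₁ ≠ ω) (hx₂ : x₂ ≠ ω) (h₁₂ : x₁ ≠ x₂)
    (hω₁ : ψ₁ ω = ω') (hω₂ : ψ₂ ω = ω') (he₁ : ψ₁ x₁ = ψ₂ x₁) (he₂ : ψ₁ x₂ = ψ₂ x₂) :
    ψ₁ = ψ₂ := by
  funext x
  by_cases hx : x = ω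
  · rw [hx, hω₁, hω₂]
  have hne : ∀ {ψ : X → Y}, IsMoebiusMap ψ → ψ ω = ω' → ∀ {z}, z ≠ ω → ψ z ≠ ω' :=
    fun hψ hω _ hz h => hz (hψ.1 (h.trans hω.symm))
  -- `ψ₁` and `ψ₂` scale inverted distances by the same factor, fixed by `p` and `q`
  have key : ∀ {p q}, p ≠ ω → q ≠ ω → p ≠ q → ψ₁ p = ψ₂ p → ψ₁ q = ψ₂ q →
      |g' (ψ₁ q) - g' (ψ₁ x)| = |g' (ψ₁ q) - g' (ψ₂ x)| := by
    intro p q hp hq hpq ep eq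
    have e₁ := h₁.invDist_mul_invDist hp hq hx
    have e₂ := h₂.invDist_mul_invDist hp hq hx
    rw [hω₁] at e₁
    rw [hω₂, ← ep, ← eq] at e₂
    rw [← hg'.invDist_eq (hne h₁ hω₁ hq) (hne h₁ hω₁ hx),
      ← hg'.invDist_eq (hne h₁ hω₁ hq) (hne h₂ hω₂ hx)]
    exact mul_left_cancel₀ (invDist_pos hp hq hpq).ne' (e₁.trans e₂.symm)
  refine hg'.eq_of_apply_eq (hne h₁ hω₁ hx) (hne h₂ hω₂ hx)
    (eq_of_abs_sub_eq_of_abs_sub_eq ?_ (key hx₂ hx₁ h₁₂.symm he₂ he₁) (key hx₁ hx₂ h₁₂ he₁ he₂))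
  exact fun h => h₁₂ (h₁.1 (hg'.eq_of_apply_eq (hne h₁ hω₁ hx₁) (hne h₁ hω₁ hx₂) h))

end IsLineCoordinate

end LineCoordinate

structure PtolemyCircle (X : Type*) [MetricSpace X] where
  γ : ℝ → X
  continuous : Continuous γ
  periodic : Function.Periodic γ 1
  injOn : InjOn γ (Ico 0 1)
  surjective : Function.Surjective γ
  ptolemy : ∀ t₁ t₂ t₃ t₄ : ℝ, t₁ ≤ t₂ → t₂ ≤ t₃ → t₃ ≤ t₄ → t₄ ≤ t₁ + 1 →
    dist (γ t₁) (γ t₃) * dist (γ t₂) (γ t₄) =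
      dist (γ t₁) (γ t₂) * dist (γ t₃) (γ t₄) + dist (γ t₁) (γ t₄) * dist (γ t₂) (γ t₃)

namespace PtolemyCircle

variable {X : Type*} [MetricSpace X] (P : PtolemyCircle X)

theorem compactSpace (P : PtolemyCircle X) : CompactSpace X :=
  ⟨P.surjective.range_eq ▸ P.periodic.compact_of_continuous one_ne_zero P.continuous⟩

theorem apply_fract (t : ℝ) : P.γ (Int.fract t) = P.γ t := by
  simpa only [mul_one, Int.self_sub_floor] using P.periodic.sub_int_mul_eq (x := t) ⌊t⌋

theorem apply_add_ne {r : ℝ} (hr : r ∈ Ioo 0 1) (c : ℝ) : P.γ (c + r) ≠ P.γ c := by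
  intro h
  rw [← P.apply_fract, ← P.apply_fract c] at h
  obtain ⟨z, hz⟩ := Int.fract_eq_fract.1 (P.injOn ⟨Int.fract_nonneg _, Int.fract_lt_one _⟩
    ⟨Int.fract_nonneg _, Int.fract_lt_one _⟩ h)
  rw [add_sub_cancel_left] at hz
  rw [hz, mem_Ioo] at hr
  norm_cast at hr
  omega

theorem apply_ne_apply_zero {t : ℝ} (ht : t ∈ Ioo 0 1) : P.γ t ≠ P.γ 0 := by
  simpa using P.apply_add_ne ht 0

def shift (c : ℝ) : PtolemyCircle X where
  γ t := P.γ (t + c)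
  continuous := P.continuous.comp (continuous_add_const c)
  periodic := P.periodic.add_const c
  injOn s hs t ht h := by
    by_contra hst
    wlog hlt : s < t generalizing s t
    · exact this t ht s hs h.symm (Ne.symm hst) (lt_of_le_of_ne (not_lt.1 hlt) (Ne.symm hst))
    refine P.apply_add_ne ⟨sub_pos.2 hlt, by linarith [hs.1, ht.2]⟩ (s + c) ?_
    rw [show s + c + (t - s) = t + c by ring]
    exact h.symm
  surjective x := by
    obtain ⟨t, rfl⟩ := P.surjective x
    exact ⟨t - c, by simp⟩
  ptolemy t₁ t₂ t₃ t₄ h₁₂ h₂₃ h₃₄ h₄₁ :=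
    P.ptolemy (t₁ + c) (t₂ + c) (t₃ + c) (t₄ + c) (by linarith) (by linarith) (by linarith)
      (by linarith)

theorem invDist_add {s t u : ℝ} (hs : 0 < s) (hst : s ≤ t) (htu : t ≤ u) (hu : u < 1) :
    invDist (P.γ 0) (P.γ s) (P.γ u) =
      invDist (P.γ 0) (P.γ s) (P.γ t) + invDist (P.γ 0) (P.γ t) (P.γ u) :=
  invDist_add_of_ptolemy (P.apply_ne_apply_zero ⟨hs, by linarith⟩)
    (P.apply_ne_apply_zero ⟨by linarith, by linarith⟩) (P.apply_ne_apply_zero ⟨by linarith, hu⟩)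
    (P.ptolemy 0 s t u hs.le hst htu (by linarith))

noncomputable def coord (t : ℝ) : ℝ :=
  if 2⁻¹ ≤ t then invDist (P.γ 0) (P.γ 2⁻¹) (P.γ t) else -invDist (P.γ 0) (P.γ 2⁻¹) (P.γ t)

theorem coord_sub_coord {s t : ℝ} (hs : 0 < s) (hst : s ≤ t) (ht : t < 1) :
    P.coord t - P.coord s = invDist (P.γ 0) (P.γ s) (P.γ t) := by
  unfold coord
  split_ifs with h₁ h₂ h₂
  · linarith [P.invDist_add (by norm_num) h₂ hst ht]
  · linarith [P.invDist_add hs (le_of_lt (not_le.1 h₂)) h₁ ht, invDist_comm (P.γ 0) (P.γ s) (P.γ 2⁻¹)]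
  · linarith
  · linarith [P.invDist_add hs hst (le_of_lt (not_le.1 h₁)) (by norm_num),
      invDist_comm (P.γ 0) (P.γ s) (P.γ 2⁻¹), invDist_comm (P.γ 0) (P.γ t) (P.γ 2⁻¹)]

theorem abs_coord_sub_coord {s t : ℝ} (hs : s ∈ Ioo 0 1) (ht : t ∈ Ioo 0 1) :
    |P.coord s - P.coord t| = invDist (P.γ 0) (P.γ s) (P.γ t) := by
  rcases le_total s t with h | h
  · rw [abs_sub_comm, P.coord_sub_coord hs.1 h ht.2, abs_of_nonneg (invDist_nonneg _ _ _)]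
  · rw [P.coord_sub_coord ht.1 h hs.2, abs_of_nonneg (invDist_nonneg _ _ _), invDist_comm]

theorem continuousOn_coord : ContinuousOn P.coord (Ioo 0 1) := by
  intro s hs
  have h₀ : Tendsto (fun t => invDist (P.γ 0) (P.γ s) (P.γ t)) (𝓝 s) (𝓝 0) := by
    have hne := P.apply_ne_apply_zero hs
    simpa [invDist_self, Function.comp_def] using
      ((continuousAt_invDist hne hne).comp P.continuous.continuousAt).tendsto
  rw [ContinuousWithinAt, tendsto_iff_dist_tendsto_zero]
  refine (h₀.mono_left nhdsWithin_le_nhds).congr' ?_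
  filter_upwards [self_mem_nhdsWithin] with t ht
  rw [Real.dist_eq, P.abs_coord_sub_coord ht hs, invDist_comm]

theorem tendsto_coord_atTop : Tendsto P.coord (𝓝[<] 1) atTop := by
  have hγ : Tendsto P.γ (𝓝[<] 1) (𝓝 (P.γ 0)) := by
    simpa [show P.γ 1 = P.γ 0 by simpa using P.periodic 0] using
      (P.continuous.tendsto 1).mono_left nhdsWithin_le_nhds
  have hI : Ioo 2⁻¹ 1 ∈ 𝓝[<] (1 : ℝ) := Ioo_mem_nhdsLT (by norm_num)
  refine (tendsto_invDist_atTop (P.apply_ne_apply_zero (t := 2⁻¹) (by norm_num)) hγ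
    (mem_of_superset hI fun t ht => P.apply_ne_apply_zero ⟨by linarith [ht.1], ht.2⟩)).congr' ?_
  filter_upwards [hI] with t ht using (if_pos ht.1.le).symm

theorem tendsto_coord_atBot : Tendsto P.coord (𝓝[>] 0) atBot := by
  have hγ : Tendsto P.γ (𝓝[>] 0) (𝓝 (P.γ 0)) :=
    (P.continuous.tendsto 0).mono_left nhdsWithin_le_nhds
  have hI : Ioo 0 2⁻¹ ∈ 𝓝[>] (0 : ℝ) := Ioo_mem_nhdsGT (by norm_num)
  refine (tendsto_neg_atTop_atBot.comp (tendsto_invDist_atTop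
    (P.apply_ne_apply_zero (t := 2⁻¹) (by norm_num)) hγ (mem_of_superset hI fun t ht =>
      P.apply_ne_apply_zero ⟨ht.1, by linarith [ht.2]⟩))).congr' ?_
  filter_upwards [hI] with t ht using (if_neg (not_le.2 ht.2)).symm

theorem exists_coord_eq (u : ℝ) : ∃ t ∈ Ioo 0 1, P.coord t = u := by
  obtain ⟨b, hub, hb⟩ :=
    ((P.tendsto_coord_atTop.eventually_ge_atTop u).and (Ioo_mem_nhdsLT one_pos)).exists
  obtain ⟨a, hau, ha⟩ :=
    ((P.tendsto_coord_atBot.eventually_le_atBot u).and (Ioo_mem_nhdsGT one_pos)).exists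
  exact isPreconnected_Ioo.intermediate_value ha hb P.continuousOn_coord ⟨hau, hub⟩

theorem exists_isLineCoordinate_apply_zero : ∃ g, IsLineCoordinate (P.γ 0) g := by
  have hparam : ∀ x, ∃ t ∈ Ico (0 : ℝ) 1, P.γ t = x := fun x => by
    obtain ⟨s, rfl⟩ := P.surjective x
    obtain ⟨t, ht, hst⟩ := P.periodic.exists_mem_Ico₀ one_pos s
    exact ⟨t, ht, hst.symm⟩
  choose τ hτ hγτ using hparam
  have hτ₀ : ∀ x ≠ P.γ 0, τ x ∈ Ioo 0 1 := fun x hx =>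
    ⟨(hτ x).1.lt_of_ne fun h => hx (by rw [← hγτ x, ← h]), (hτ x).2⟩
  refine ⟨P.coord ∘ τ, fun x y hx hy => ?_, fun u => ?_⟩
  · rw [Function.comp_apply, Function.comp_apply, P.abs_coord_sub_coord (hτ₀ x hx) (hτ₀ y hy),
      hγτ, hγτ]
  · obtain ⟨t, ht, rfl⟩ := P.exists_coord_eq u
    refine ⟨P.γ t, P.apply_ne_apply_zero ht, ?_⟩
    rw [Function.comp_apply, P.injOn (hτ _) (Ioo_subset_Ico_self ht) (hγτ _)]

theorem exists_isLineCoordinate (P : PtolemyCircle X) (ω : X) : ∃ g, IsLineCoordinate ω g := by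
  obtain ⟨c, rfl⟩ := P.surjective ω
  simpa [shift] using (P.shift c).exists_isLineCoordinate_apply_zero

end PtolemyCircle

/-- Given two Ptolemy circles `C` and `C'` (metric spaces homeomorphic to `S¹`,
parameterized with period 1, satisfying the Ptolemy equality on cyclically ordered
quadruples) and triples of distinct points `x₁,x₂,x₃ ∈ C`, `x₁',x₂',x₃' ∈ C'`,
there is a unique Möbius homeomorphism `φ : C → C'` with `φ(xᵢ) = xᵢ'`. -/
theorem stmt_12 {C C' : Type*} [MetricSpace C] [MetricSpace C']
    (γ : ℝ → C) (hcont : Continuous γ) (hper : ∀ t, γ (t + 1) = γ t)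
    (hinj : ∀ s t : ℝ, s ∈ Set.Ico (0:ℝ) 1 → t ∈ Set.Ico (0:ℝ) 1 → γ s = γ t → s = t)
    (hsurj : Function.Surjective γ)
    (hcirc : ∀ t₁ t₂ t₃ t₄ : ℝ, t₁ ≤ t₂ → t₂ ≤ t₃ → t₃ ≤ t₄ → t₄ ≤ t₁ + 1 →
      dist (γ t₁) (γ t₃) * dist (γ t₂) (γ t₄) =
        dist (γ t₁) (γ t₂) * dist (γ t₃) (γ t₄) + dist (γ t₁) (γ t₄) * dist (γ t₂) (γ t₃))
    (γ' : ℝ → C') (hcont' : Continuous γ') (hper' : ∀ t, γ' (t + 1) = γ' t)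
    (hinj' : ∀ s t : ℝ, s ∈ Set.Ico (0:ℝ) 1 → t ∈ Set.Ico (0:ℝ) 1 → γ' s = γ' t → s = t)
    (hsurj' : Function.Surjective γ')
    (hcirc' : ∀ t₁ t₂ t₃ t₄ : ℝ, t₁ ≤ t₂ → t₂ ≤ t₃ → t₃ ≤ t₄ → t₄ ≤ t₁ + 1 →
      dist (γ' t₁) (γ' t₃) * dist (γ' t₂) (γ' t₄) =
        dist (γ' t₁) (γ' t₂) * dist (γ' t₃) (γ' t₄) + dist (γ' t₁) (γ' t₄) * dist (γ' t₂) (γ' t₃))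
    (x₁ x₂ x₃ : C) (x₁' x₂' x₃' : C')
    (h12 : x₁ ≠ x₂) (h13 : x₁ ≠ x₃) (h23 : x₂ ≠ x₃)
    (h12' : x₁' ≠ x₂') (h13' : x₁' ≠ x₃') (h23' : x₂' ≠ x₃') :
    ∃! φ : C → C', (Function.Bijective φ ∧ Continuous φ ∧ IsMoebiusMap φ) ∧
      φ x₁ = x₁' ∧ φ x₂ = x₂' ∧ φ x₃ = x₃' := by
  let P : PtolemyCircle C := ⟨γ, hcont, hper, fun s hs t ht h => hinj s t hs ht h, hsurj, hcirc⟩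
  let P' : PtolemyCircle C' := ⟨γ', hcont', hper', fun s hs t ht h => hinj' s t hs ht h, hsurj',
    hcirc'⟩
  have := P'.compactSpace
  have : Nontrivial C := ⟨⟨x₁, x₂, h12⟩⟩
  obtain ⟨g, hg⟩ := P.exists_isLineCoordinate x₃
  obtain ⟨g', hg'⟩ := P'.exists_isLineCoordinate x₃'
  have hg₁₂ : g x₁ - g x₂ ≠ 0 := sub_ne_zero.2 fun h => h12 (hg.eq_of_apply_eq h13 h23 h)
  have hg₁₂' : g' x₁' - g' x₂' ≠ 0 := sub_ne_zero.2 fun h => h12' (hg'.eq_of_apply_eq h13' h23' h)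
  set a := (g' x₁' - g' x₂') / (g x₁ - g x₂)
  have ha : a ≠ 0 := div_ne_zero hg₁₂' hg₁₂
  obtain ⟨φ, hφ₃, hφ⟩ := hg'.exists_map x₃ (fun x => a * g x + (g' x₁' - a * g x₁))
  have hφ₁ : φ x₁ = x₁' := hg'.eq_of_apply_eq (hφ x₁ h13).1 h13' (by rw [(hφ x₁ h13).2]; ring)
  have hφ₂ : φ x₂ = x₂' := hg'.eq_of_apply_eq (hφ x₂ h23).1 h23' (by
    rw [(hφ x₂ h23).2]
    linear_combination -div_mul_cancel₀ (g' x₁' - g' x₂') hg₁₂)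
  obtain ⟨ρ, hρ, hdist⟩ := hg.exists_dist_eq_mul_of_affine hg' ha hφ₃ hφ
  have hmoeb := IsMoebiusMap.of_dist_eq_mul hρ hdist
  refine ⟨φ, ⟨⟨⟨hmoeb.1, hg.surjective_of_affine hg' ha hφ₃ hφ⟩,
    continuous_of_dist_eq_mul hρ hdist, hmoeb⟩, hφ₁, hφ₂, hφ₃⟩, ?_⟩
  rintro ψ ⟨⟨-, -, hψ⟩, hψ₁, hψ₂, hψ₃⟩
  exact hg'.eq_of_isMoebiusMap hψ hmoeb h13 h23 h12 hψ₃ hφ₃ (hψ₁.trans hφ₁.symm)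
    (hψ₂.trans hφ₂.symm)
end

section
/- Let C be a Ptolemy circle and x₁, x₂, x₃ ∈ C distinct points. Then the map φ: C → ∂Δ defined by φ(t) = crt(t, x₁, x₂, x₃) is injective. -/
/-- Key Ptolemy step: if `σ ≤ a ≤ b ≤ τ ≤ σ+1`, the endpoints `γ a ≠ γ b`, and the
cross-ratio relation holds, then `γ σ = γ τ`. -/
private lemma ptolemy_step {C : Type*} [MetricSpace C] (γ : ℝ → C)
    (hcirc : ∀ t₁ t₂ t₃ t₄ : ℝ, t₁ ≤ t₂ → t₂ ≤ t₃ → t₃ ≤ t₄ → t₄ ≤ t₁ + 1 →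
      dist (γ t₁) (γ t₃) * dist (γ t₂) (γ t₄) =
        dist (γ t₁) (γ t₂) * dist (γ t₃) (γ t₄) + dist (γ t₁) (γ t₄) * dist (γ t₂) (γ t₃))
    (σ a b τ : ℝ) (h1 : σ ≤ a) (h2 : a ≤ b) (h3 : b ≤ τ) (h4 : τ ≤ σ + 1)
    (hab : γ a ≠ γ b)
    (e : dist (γ σ) (γ a) * dist (γ τ) (γ b) = dist (γ τ) (γ a) * dist (γ σ) (γ b)) :
    γ σ = γ τ := by
  have h := hcirc σ a b τ h1 h2 h3 h4
  rw [dist_comm (γ a) (γ τ), dist_comm (γ b) (γ τ)] at h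
  have hd : dist (γ σ) (γ τ) * dist (γ a) (γ b) = 0 := by
    linear_combination -h - e
  rcases mul_eq_zero.mp hd with h0 | h0
  · exact dist_eq_zero.mp h0
  · exact absurd (dist_eq_zero.mp h0) hab

/-- Let `C` be a Ptolemy circle (parameterized with period 1 and satisfying the
Ptolemy equality on cyclically ordered quadruples) and `x₁, x₂, x₃ ∈ C` distinct.
Then the map `t ↦ crt(t,x₁,x₂,x₃) ∈ ∂Δ` is injective: if the cross-ratio triples of
`(s,x₁,x₂,x₃)` and `(t,x₁,x₂,x₃)` agree as projective points, then `s = t`. -/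
theorem stmt_13 {C : Type*} [MetricSpace C]
    (γ : ℝ → C) (hcont : Continuous γ) (hper : ∀ t, γ (t + 1) = γ t)
    (hinj : ∀ s t : ℝ, s ∈ Set.Ico (0:ℝ) 1 → t ∈ Set.Ico (0:ℝ) 1 → γ s = γ t → s = t)
    (hsurj : Function.Surjective γ)
    (hcirc : ∀ t₁ t₂ t₃ t₄ : ℝ, t₁ ≤ t₂ → t₂ ≤ t₃ → t₃ ≤ t₄ → t₄ ≤ t₁ + 1 →
      dist (γ t₁) (γ t₃) * dist (γ t₂) (γ t₄) =
        dist (γ t₁) (γ t₂) * dist (γ t₃) (γ t₄) + dist (γ t₁) (γ t₄) * dist (γ t₂) (γ t₃))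
    (x₁ x₂ x₃ : C) (h12 : x₁ ≠ x₂) (h13 : x₁ ≠ x₃) (h23 : x₂ ≠ x₃) :
    ∀ s t : C,
      (dist s x₁ * dist x₂ x₃) * (dist t x₂ * dist x₁ x₃) =
        (dist t x₁ * dist x₂ x₃) * (dist s x₂ * dist x₁ x₃) →
      (dist s x₂ * dist x₁ x₃) * (dist t x₃ * dist x₁ x₂) =
        (dist t x₂ * dist x₁ x₃) * (dist s x₃ * dist x₁ x₂) →
      (dist s x₁ * dist x₂ x₃) * (dist t x₃ * dist x₁ x₂) =
        (dist t x₁ * dist x₂ x₃) * (dist s x₃ * dist x₁ x₂) →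
      s = t := by
  intro s t h1 h2 h3
  have c12 : (0:ℝ) < dist x₁ x₂ := dist_pos.mpr h12
  have c13 : (0:ℝ) < dist x₁ x₃ := dist_pos.mpr h13
  have c23 : (0:ℝ) < dist x₂ x₃ := dist_pos.mpr h23
  have e12 : dist s x₁ * dist t x₂ = dist t x₁ * dist s x₂ := by
    apply mul_right_cancel₀ (ne_of_gt (mul_pos c23 c13))
    linear_combination h1
  have e23 : dist s x₂ * dist t x₃ = dist t x₂ * dist s x₃ := by
    apply mul_right_cancel₀ (ne_of_gt (mul_pos c13 c12))
    linear_combination h2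
  have e13 : dist s x₁ * dist t x₃ = dist t x₁ * dist s x₃ := by
    apply mul_right_cancel₀ (ne_of_gt (mul_pos c23 c12))
    linear_combination h3
  -- degenerate cases: s or t equals some xᵢ
  by_cases hs1 : s = x₁
  · have h0 : dist t x₁ * dist s x₂ = 0 := by rw [← e12, hs1, dist_self, zero_mul]
    have hsx2 : s ≠ x₂ := by rw [hs1]; exact h12
    rcases mul_eq_zero.mp h0 with h0 | h0
    · exact hs1.trans (dist_eq_zero.mp h0).symm
    · exact absurd (dist_eq_zero.mp h0) hsx2
  by_cases hs2 : s = x₂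
  · have h0 : dist s x₁ * dist t x₂ = 0 := by rw [e12, hs2, dist_self, mul_zero]
    have hsx1 : s ≠ x₁ := hs1
    rcases mul_eq_zero.mp h0 with h0 | h0
    · exact absurd (dist_eq_zero.mp h0) hsx1
    · exact hs2.trans (dist_eq_zero.mp h0).symm
  by_cases hs3 : s = x₃
  · have h0 : dist s x₁ * dist t x₃ = 0 := by rw [e13, hs3, dist_self, mul_zero]
    rcases mul_eq_zero.mp h0 with h0 | h0
    · exact absurd (dist_eq_zero.mp h0) hs1
    · exact hs3.trans (dist_eq_zero.mp h0).symm
  by_cases ht1 : t = x₁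
  · have h0 : dist s x₁ * dist t x₂ = 0 := by rw [e12, ht1, dist_self, zero_mul]
    have htx2 : t ≠ x₂ := by rw [ht1]; exact h12
    rcases mul_eq_zero.mp h0 with h0 | h0
    · exact absurd (dist_eq_zero.mp h0) hs1
    · exact absurd (dist_eq_zero.mp h0) htx2
  by_cases ht2 : t = x₂
  · have h0 : dist t x₁ * dist s x₂ = 0 := by rw [← e12, ht2, dist_self, mul_zero]
    rcases mul_eq_zero.mp h0 with h0 | h0
    · exact absurd (dist_eq_zero.mp h0) ht1
    · exact absurd (dist_eq_zero.mp h0) hs2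
  by_cases ht3 : t = x₃
  · have h0 : dist t x₁ * dist s x₃ = 0 := by rw [← e13, ht3, dist_self, mul_zero]
    rcases mul_eq_zero.mp h0 with h0 | h0
    · exact absurd (dist_eq_zero.mp h0) ht1
    · exact absurd (dist_eq_zero.mp h0) hs3
  -- main case
  by_contra hst
  -- integer periodicity
  have hZ : ∀ (n : ℤ) (r : ℝ), γ (r + n) = γ r := by
    intro n r
    have hP : Function.Periodic γ 1 := hper
    have := (hP.int_mul n) r
    simpa using this
  obtain ⟨σ, hσ⟩ := hsurj s
  have hparam : ∀ p : C, p ≠ s → ∃ r, σ < r ∧ r < σ + 1 ∧ γ r = p := by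
    intro p hp
    obtain ⟨r0, hr0⟩ := hsurj p
    refine ⟨σ + Int.fract (r0 - σ), ?_, ?_, ?_⟩
    · rcases eq_or_lt_of_le (by linarith [Int.fract_nonneg (r0 - σ)] :
        σ ≤ σ + Int.fract (r0 - σ)) with h | h
      · exfalso
        apply hp
        rw [← hr0, show r0 = σ + (⌊r0 - σ⌋ : ℤ) by
          have : σ = σ + Int.fract (r0 - σ) := h
          have h2' : Int.fract (r0 - σ) = 0 := by linarith
          have := Int.fract_add_floor (r0 - σ)
          push_cast
          linarith]
        rw [hZ, hσ]
      · exact h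
    · linarith [Int.fract_lt_one (r0 - σ)]
    · rw [show σ + Int.fract (r0 - σ) = r0 + (-⌊r0 - σ⌋ : ℤ) by
        rw [Int.fract]; push_cast; ring, hZ]
      exact hr0
  obtain ⟨τ, hτ1, hτ2, hτ⟩ := hparam t (fun h => hst h.symm)
  obtain ⟨a₁, ha₁1, ha₁2, ha₁⟩ := hparam x₁ (fun h => hs1 h.symm)
  obtain ⟨a₂, ha₂1, ha₂2, ha₂⟩ := hparam x₂ (fun h => hs2 h.symm)
  obtain ⟨a₃, ha₃1, ha₃2, ha₃⟩ := hparam x₃ (fun h => hs3 h.symm)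
  have hσ1 : γ (σ + 1) = γ σ := hper σ
  have side1 : ∀ a b : ℝ, σ < a → a < τ → σ < b → b < τ →
      γ a ≠ γ b →
      dist s (γ a) * dist t (γ b) = dist t (γ a) * dist s (γ b) → False := by
    intro a b ha1 ha2 hb1 hb2 hab e
    rcases le_total a b with h | h
    · have := ptolemy_step γ hcirc σ a b τ ha1.le h hb2.le (by linarith) hab
        (by rw [hσ, hτ]; exact e)
      exact hst (by rw [← hσ, ← hτ]; exact this)
    · have := ptolemy_step γ hcirc σ b a τ hb1.le h ha2.le (by linarith) hab.symm
        (by rw [hσ, hτ]; linear_combination -e)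
      exact hst (by rw [← hσ, ← hτ]; exact this)
  have side2 : ∀ a b : ℝ, τ < a → a < σ + 1 → τ < b → b < σ + 1 →
      γ a ≠ γ b →
      dist s (γ a) * dist t (γ b) = dist t (γ a) * dist s (γ b) → False := by
    intro a b ha1 ha2 hb1 hb2 hab e
    rcases le_total a b with h | h
    · have := ptolemy_step γ hcirc τ a b (σ + 1) ha1.le h hb2.le (by linarith) hab
        (by rw [hσ1, hσ, hτ]; exact e.symm)
      exact hst (by rw [← hσ, ← hτ]; exact (this.trans hσ1).symm)
    · have := ptolemy_step γ hcirc τ b a (σ + 1) hb1.le h ha2.le (by linarith) hab.symm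
        (by rw [hσ1, hσ, hτ]; linear_combination e)
      exact hst (by rw [← hσ, ← hτ]; exact (this.trans hσ1).symm)
  have h1τ : a₁ ≠ τ := fun h => ht1 (by rw [← hτ, ← h, ha₁])
  have h2τ : a₂ ≠ τ := fun h => ht2 (by rw [← hτ, ← h, ha₂])
  have h3τ : a₃ ≠ τ := fun h => ht3 (by rw [← hτ, ← h, ha₃])
  rcases lt_or_gt_of_ne h1τ with hh1 | hh1 <;>
  rcases lt_or_gt_of_ne h2τ with hh2 | hh2 <;>
  rcases lt_or_gt_of_ne h3τ with hh3 | hh3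
  · exact side1 a₁ a₂ ha₁1 hh1 ha₂1 hh2 (by rw [ha₁, ha₂]; exact h12) (by rw [ha₁, ha₂]; exact e12)
  · exact side1 a₁ a₂ ha₁1 hh1 ha₂1 hh2 (by rw [ha₁, ha₂]; exact h12) (by rw [ha₁, ha₂]; exact e12)
  · exact side1 a₁ a₃ ha₁1 hh1 ha₃1 hh3 (by rw [ha₁, ha₃]; exact h13) (by rw [ha₁, ha₃]; exact e13)
  · exact side2 a₂ a₃ hh2 ha₂2 hh3 ha₃2 (by rw [ha₂, ha₃]; exact h23) (by rw [ha₂, ha₃]; exact e23)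
  · exact side1 a₂ a₃ ha₂1 hh2 ha₃1 hh3 (by rw [ha₂, ha₃]; exact h23) (by rw [ha₂, ha₃]; exact e23)
  · exact side2 a₁ a₃ hh1 ha₁2 hh3 ha₃2 (by rw [ha₁, ha₃]; exact h13) (by rw [ha₁, ha₃]; exact e13)
  · exact side2 a₁ a₂ hh1 ha₁2 hh2 ha₂2 (by rw [ha₁, ha₂]; exact h12) (by rw [ha₁, ha₂]; exact e12)
  · exact side2 a₁ a₂ hh1 ha₁2 hh2 ha₂2 (by rw [ha₁, ha₂]; exact h12) (by rw [ha₁, ha₂]; exact e12)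
end

section
/- Let (X,d) be an extended Ptolemy metric space with remote point ∞ ∈ X, such that every quadruple of points of X lies on a Ptolemy circle in X. Then X \ {∞} with the metric d is isometric to a subset of the real line ℝ. -/
open scoped ENNReal

/-- The "finite-part" distance used for cross-ratio computations in an extended
metric space with remote point `pinf`, following the conventions for `∞`. -/
noncomputable def extD {X : Type*} (d : X → X → ℝ≥0∞) (pinf : X) (a b : X) : ℝ≥0∞ :=
  open Classical in
  if a = pinf ∧ b = pinf then 0 else if a = pinf ∨ b = pinf then 1 else d a b

lemma sort4' {α : Type*} [LinearOrder α] {P : α → α → α → α → Prop}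
    (h12 : ∀ a b c d, P a b c d → P b a c d)
    (h23 : ∀ a b c d, P a b c d → P a c b d)
    (h34 : ∀ a b c d, P a b c d → P a b d c)
    (hs : ∀ a b c d, a ≤ b → b ≤ c → c ≤ d → P a b c d) :
    ∀ a b c d, P a b c d := by
  suffices H1 : ∀ a b c d : α, a ≤ b → P a b c d by
    intro a b c d
    rcases le_total a b with h | h
    · exact H1 a b c d h
    · exact h12 b a c d (H1 b a c d h)
  suffices H2 : ∀ a b c d : α, a ≤ b → c ≤ d → P a b c d by
    intro a b c d hab
    rcases le_total c d with h | h
    · exact H2 a b c d hab h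
    · exact h34 a b d c (H2 a b d c hab h)
  suffices H3 : ∀ a b c d : α, a ≤ b → c ≤ d → a ≤ c → P a b c d by
    intro a b c d hab hcd
    rcases le_total a c with h | h
    · exact H3 a b c d hab hcd h
    · exact h23 _ _ _ _ (h34 _ _ _ _ (h12 _ _ _ _ (h23 _ _ _ _ (H3 c d a b hcd hab h))))
  intro a b c d hab hcd hac
  rcases le_total b c with h | h
  · exact hs a b c d hab h hcd
  · rcases le_total b d with h' | h'
    · exact h23 a c b d (hs a c b d hac h h')
    · exact h23 _ _ _ _ (h34 _ _ _ _ (hs a c d b hac hcd h'))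

lemma abs3 {a b w : ℝ} (hw : 0 ≤ w)
    (h : w = |a| + |b| ∨ |a| = w + |b| ∨ |b| = w + |a|) :
    w = |a + b| ∨ w = |a - b| := by
  rcases le_total 0 a with ha | ha <;> rcases le_total 0 b with hb | hb <;>
    rcases le_total 0 (a + b) with hab | hab <;> rcases le_total 0 (a - b) with hab2 | hab2 <;>
    [skip; skip; skip; skip; skip; skip; skip; skip; skip; skip; skip; skip; skip; skip; skip;
      skip] <;>
    (first
      | rw [abs_of_nonneg ha] at h
      | rw [abs_of_nonpos ha] at h) <;>
    (first
      | rw [abs_of_nonneg hb] at h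
      | rw [abs_of_nonpos hb] at h) <;>
    rcases h with h | h | h <;>
    (first
      | (left; rw [abs_of_nonneg hab]; linarith)
      | (left; rw [abs_of_nonpos hab]; linarith)
      | (right; rw [abs_of_nonneg hab2]; linarith)
      | (right; rw [abs_of_nonpos hab2]; linarith))

lemma key {α px py w : ℝ} (hα : 0 < α) (hw : 0 ≤ w)
    (h1 : w = |px| + |py| ∨ |px| = w + |py| ∨ |py| = w + |px|)
    (h2 : w = |px - α| + |py - α| ∨ |px - α| = w + |py - α| ∨ |py - α| = w + |px - α|)
    (h3 : α * w = |px| * |py - α| + |py| * |px - α| ∨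
      |px| * |py - α| = α * w + |py| * |px - α| ∨
      |py| * |px - α| = α * w + |px| * |py - α|) :
    w = |px - py| := by
  rcases abs3 hw h1 with hA | hA
  swap
  · exact hA
  rcases abs3 hw h2 with hB | hB
  swap
  · rwa [show px - α - (py - α) = px - py by ring] at hB
  rw [show px - α + (py - α) = px + py - 2 * α by ring] at hB
  have hm : px + py = α := by
    have hsq : (px + py) ^ 2 = (px + py - 2 * α) ^ 2 := by
      rw [← sq_abs (px + py), ← sq_abs (px + py - 2 * α), ← hA, ← hB]
    nlinarith [hsq, hα]
  have hpy : py = α - px := by linarith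
  subst hpy
  have hw' : w = α := by
    rw [hA, show px + (α - px) = α by ring, abs_of_pos hα]
  rw [show α - px - α = -px by ring, abs_neg] at h3
  rw [show px - (α - px) = 2 * px - α by ring]
  have habs : |α - px| = |px - α| := abs_sub_comm _ _
  rw [habs, hw'] at h3
  have e1 : |px| * |px| = px ^ 2 := by rw [← abs_mul, abs_mul_self]; ring
  have e2 : |px - α| * |px - α| = (px - α) ^ 2 := by rw [← abs_mul, abs_mul_self]; ring
  rw [e1, e2] at h3
  rw [hw']
  rcases h3 with h | h | h
  · have h0 : px * (px - α) = 0 := by nlinarith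
    rcases mul_eq_zero.mp h0 with h0 | h0
    · rw [h0, show 2 * (0:ℝ) - α = -α by ring, abs_neg, abs_of_pos hα]
    · have : px = α := by linarith
      rw [this, show 2 * α - α = α by ring, abs_of_pos hα]
  · have : px = α := by nlinarith
    rw [this, show 2 * α - α = α by ring, abs_of_pos hα]
  · have : px = 0 := by nlinarith
    rw [this, show 2 * (0:ℝ) - α = -α by ring, abs_neg, abs_of_pos hα]

/-- Let `(X,d)` be an extended Ptolemy metric space with remote point `∞` such that
every quadruple of points lies on a Ptolemy circle. Then `X \ {∞}` is isometric to a
subset of the real line. -/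
theorem stmt_15 {X : Type*} (d : X → X → ℝ≥0∞) (pinf : X)
    (hsymm : ∀ x y, d x y = d y x)
    (hzero : ∀ x y, d x y = 0 ↔ x = y)
    (hfin : ∀ x y, x ≠ pinf → y ≠ pinf → d x y ≠ ∞)
    (hinf : ∀ x, x ≠ pinf → d x pinf = ∞)
    (htri : ∀ x y z, x ≠ pinf → y ≠ pinf → z ≠ pinf → d x z ≤ d x y + d y z)
    (hpt : ∀ x y z w : X,
      extD d pinf x y * extD d pinf z w ≤
        extD d pinf x z * extD d pinf y w + extD d pinf x w * extD d pinf y z)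
    (hcirc : ∀ x y z w : X, ∃ γ : ℝ → X,
      (∀ t, γ (t + 1) = γ t) ∧
      (∀ s t : ℝ, s ∈ Set.Ico (0:ℝ) 1 → t ∈ Set.Ico (0:ℝ) 1 → γ s = γ t → s = t) ∧
      (∀ t₁ t₂ t₃ t₄ : ℝ, t₁ ≤ t₂ → t₂ ≤ t₃ → t₃ ≤ t₄ → t₄ ≤ t₁ + 1 →
        extD d pinf (γ t₁) (γ t₃) * extD d pinf (γ t₂) (γ t₄) =
          extD d pinf (γ t₁) (γ t₂) * extD d pinf (γ t₃) (γ t₄) +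
            extD d pinf (γ t₁) (γ t₄) * extD d pinf (γ t₂) (γ t₃)) ∧
      x ∈ Set.range γ ∧ y ∈ Set.range γ ∧ z ∈ Set.range γ ∧ w ∈ Set.range γ) :
    ∃ f : X → ℝ, ∀ x y : X, x ≠ pinf → y ≠ pinf → |f x - f y| = (d x y).toReal := by
  have Esymm : ∀ a b, extD d pinf a b = extD d pinf b a := by
    intro a b
    by_cases ha : a = pinf <;> by_cases hb : b = pinf <;>
      simp [extD, ha, hb, hsymm a b]
  have q12 : ∀ p q r s : X,
      (extD d pinf p q * extD d pinf r s = extD d pinf p r * extD d pinf q s + extD d pinf p s * extD d pinf q r ∨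
       extD d pinf p r * extD d pinf q s = extD d pinf p q * extD d pinf r s + extD d pinf p s * extD d pinf q r ∨
       extD d pinf p s * extD d pinf q r = extD d pinf p q * extD d pinf r s + extD d pinf p r * extD d pinf q s) →
      (extD d pinf q p * extD d pinf r s = extD d pinf q r * extD d pinf p s + extD d pinf q s * extD d pinf p r ∨
       extD d pinf q r * extD d pinf p s = extD d pinf q p * extD d pinf r s + extD d pinf q s * extD d pinf p r ∨
       extD d pinf q s * extD d pinf p r = extD d pinf q p * extD d pinf r s + extD d pinf q r * extD d pinf p s) := by
    intro p q r s h
    rcases h with h | h | h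
    · left; rw [Esymm q p, h]; ring
    · right; right; rw [Esymm q p, mul_comm (extD d pinf q s) (extD d pinf p r), h]; ring
    · right; left; rw [Esymm q p, mul_comm (extD d pinf q r) (extD d pinf p s), h]; ring
  have q23 : ∀ p q r s : X,
      (extD d pinf p q * extD d pinf r s = extD d pinf p r * extD d pinf q s + extD d pinf p s * extD d pinf q r ∨
       extD d pinf p r * extD d pinf q s = extD d pinf p q * extD d pinf r s + extD d pinf p s * extD d pinf q r ∨
       extD d pinf p s * extD d pinf q r = extD d pinf p q * extD d pinf r s + extD d pinf p r * extD d pinf q s) →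
      (extD d pinf p r * extD d pinf q s = extD d pinf p q * extD d pinf r s + extD d pinf p s * extD d pinf r q ∨
       extD d pinf p q * extD d pinf r s = extD d pinf p r * extD d pinf q s + extD d pinf p s * extD d pinf r q ∨
       extD d pinf p s * extD d pinf r q = extD d pinf p r * extD d pinf q s + extD d pinf p q * extD d pinf r s) := by
    intro p q r s h
    rcases h with h | h | h
    · right; left; rw [Esymm r q, h]
    · left; rw [Esymm r q, h]
    · right; right; rw [Esymm r q, h]; ring
  have q34 : ∀ p q r s : X,
      (extD d pinf p q * extD d pinf r s = extD d pinf p r * extD d pinf q s + extD d pinf p s * extD d pinf q r ∨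
       extD d pinf p r * extD d pinf q s = extD d pinf p q * extD d pinf r s + extD d pinf p s * extD d pinf q r ∨
       extD d pinf p s * extD d pinf q r = extD d pinf p q * extD d pinf r s + extD d pinf p r * extD d pinf q s) →
      (extD d pinf p q * extD d pinf s r = extD d pinf p s * extD d pinf q r + extD d pinf p r * extD d pinf q s ∨
       extD d pinf p s * extD d pinf q r = extD d pinf p q * extD d pinf s r + extD d pinf p r * extD d pinf q s ∨
       extD d pinf p r * extD d pinf q s = extD d pinf p q * extD d pinf s r + extD d pinf p s * extD d pinf q r) := by
    intro p q r s h
    rcases h with h | h | h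
    · left; rw [Esymm s r, h]; ring
    · right; right; rw [Esymm s r, h]
    · right; left; rw [Esymm s r, h]
  have hdisj : ∀ p q r s : X,
      extD d pinf p q * extD d pinf r s = extD d pinf p r * extD d pinf q s + extD d pinf p s * extD d pinf q r ∨
      extD d pinf p r * extD d pinf q s = extD d pinf p q * extD d pinf r s + extD d pinf p s * extD d pinf q r ∨
      extD d pinf p s * extD d pinf q r = extD d pinf p q * extD d pinf r s + extD d pinf p r * extD d pinf q s := by
    intro p q r s
    obtain ⟨γ, hper, hinj, heq, ⟨tp, hp⟩, ⟨tq, hq⟩, ⟨tr, hr⟩, ⟨ts, hts⟩⟩ := hcirc p q r s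
    have hperi : Function.Periodic γ 1 := hper
    have hfr : ∀ t : ℝ, γ (Int.fract t) = γ t := by
      intro t
      have h2 : γ (t - (⌊t⌋ : ℝ) * 1) = γ t := hperi.sub_int_mul_eq ⌊t⌋
      rw [mul_one] at h2
      rwa [Int.self_sub_floor] at h2
    have main : ∀ u v w z : {t : ℝ // 0 ≤ t ∧ t < 1},
        extD d pinf (γ u.1) (γ v.1) * extD d pinf (γ w.1) (γ z.1) = extD d pinf (γ u.1) (γ w.1) * extD d pinf (γ v.1) (γ z.1) + extD d pinf (γ u.1) (γ z.1) * extD d pinf (γ v.1) (γ w.1) ∨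
        extD d pinf (γ u.1) (γ w.1) * extD d pinf (γ v.1) (γ z.1) = extD d pinf (γ u.1) (γ v.1) * extD d pinf (γ w.1) (γ z.1) + extD d pinf (γ u.1) (γ z.1) * extD d pinf (γ v.1) (γ w.1) ∨
        extD d pinf (γ u.1) (γ z.1) * extD d pinf (γ v.1) (γ w.1) = extD d pinf (γ u.1) (γ v.1) * extD d pinf (γ w.1) (γ z.1) + extD d pinf (γ u.1) (γ w.1) * extD d pinf (γ v.1) (γ z.1) := by
      apply sort4' (P := fun u v w z : {t : ℝ // 0 ≤ t ∧ t < 1} =>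
        extD d pinf (γ u.1) (γ v.1) * extD d pinf (γ w.1) (γ z.1) = extD d pinf (γ u.1) (γ w.1) * extD d pinf (γ v.1) (γ z.1) + extD d pinf (γ u.1) (γ z.1) * extD d pinf (γ v.1) (γ w.1) ∨
        extD d pinf (γ u.1) (γ w.1) * extD d pinf (γ v.1) (γ z.1) = extD d pinf (γ u.1) (γ v.1) * extD d pinf (γ w.1) (γ z.1) + extD d pinf (γ u.1) (γ z.1) * extD d pinf (γ v.1) (γ w.1) ∨
        extD d pinf (γ u.1) (γ z.1) * extD d pinf (γ v.1) (γ w.1) = extD d pinf (γ u.1) (γ v.1) * extD d pinf (γ w.1) (γ z.1) + extD d pinf (γ u.1) (γ w.1) * extD d pinf (γ v.1) (γ z.1))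
      · intro a b c e h; exact q12 _ _ _ _ h
      · intro a b c e h; exact q23 _ _ _ _ h
      · intro a b c e h; exact q34 _ _ _ _ h
      · intro a b c e h1 h2 h3
        right; left
        exact heq a.1 b.1 c.1 e.1 h1 h2 h3 (by have := e.2.2; have := a.2.1; linarith)
    have hmem : ∀ t : ℝ, 0 ≤ Int.fract t ∧ Int.fract t < 1 := fun t =>
      ⟨Int.fract_nonneg t, Int.fract_lt_one t⟩
    have hres := main ⟨Int.fract tp, hmem tp⟩ ⟨Int.fract tq, hmem tq⟩ ⟨Int.fract tr, hmem tr⟩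
      ⟨Int.fract ts, hmem ts⟩
    rw [hfr tp, hfr tq, hfr tr, hfr ts, hp, hq, hr, hts] at hres
    exact hres
  have Efin : ∀ a b, a ≠ pinf → b ≠ pinf → extD d pinf a b = d a b := by
    intro a b ha hb; simp [extD, ha, hb]
  have Einf : ∀ a, a ≠ pinf → extD d pinf a pinf = 1 := by
    intro a ha; simp [extD, ha]
  have hlinE : ∀ x y z, x ≠ pinf → y ≠ pinf → z ≠ pinf →
      (d x y = d x z + d y z ∨ d x z = d x y + d y z ∨ d y z = d x y + d x z) := by
    intro x y z hx hy hz
    have h := hdisj x y z pinf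
    rw [Efin x y hx hy, Efin x z hx hz, Efin y z hy hz, Einf x hx, Einf y hy, Einf z hz] at h
    simpa using h
  have hlinR : ∀ x y z, x ≠ pinf → y ≠ pinf → z ≠ pinf →
      ((d x y).toReal = (d x z).toReal + (d y z).toReal ∨
       (d x z).toReal = (d x y).toReal + (d y z).toReal ∨
       (d y z).toReal = (d x y).toReal + (d x z).toReal) := by
    intro x y z hx hy hz
    rcases hlinE x y z hx hy hz with h | h | h
    · left; rw [h, ENNReal.toReal_add (hfin x z hx hz) (hfin y z hy hz)]
    · right; left; rw [h, ENNReal.toReal_add (hfin x y hx hy) (hfin y z hy hz)]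
    · right; right; rw [h, ENNReal.toReal_add (hfin x y hx hy) (hfin x z hx hz)]
  have hquadR : ∀ p q r s, p ≠ pinf → q ≠ pinf → r ≠ pinf → s ≠ pinf →
      ((d p q).toReal * (d r s).toReal = (d p r).toReal * (d q s).toReal + (d p s).toReal * (d q r).toReal ∨
       (d p r).toReal * (d q s).toReal = (d p q).toReal * (d r s).toReal + (d p s).toReal * (d q r).toReal ∨
       (d p s).toReal * (d q r).toReal = (d p q).toReal * (d r s).toReal + (d p r).toReal * (d q s).toReal) := by
    intro p q r s hp hq hr hs2
    have h := hdisj p q r s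
    rw [Efin p q hp hq, Efin r s hr hs2, Efin p r hp hr, Efin q s hq hs2,
      Efin p s hp hs2, Efin q r hq hr] at h
    rcases h with h | h | h
    · left
      have h' := congrArg ENNReal.toReal h
      rwa [ENNReal.toReal_add (ENNReal.mul_ne_top (hfin p r hp hr) (hfin q s hq hs2))
        (ENNReal.mul_ne_top (hfin p s hp hs2) (hfin q r hq hr)), ENNReal.toReal_mul,
        ENNReal.toReal_mul, ENNReal.toReal_mul] at h'
    · right; left
      have h' := congrArg ENNReal.toReal h
      rwa [ENNReal.toReal_add (ENNReal.mul_ne_top (hfin p q hp hq) (hfin r s hr hs2))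
        (ENNReal.mul_ne_top (hfin p s hp hs2) (hfin q r hq hr)), ENNReal.toReal_mul,
        ENNReal.toReal_mul, ENNReal.toReal_mul] at h'
    · right; right
      have h' := congrArg ENNReal.toReal h
      rwa [ENNReal.toReal_add (ENNReal.mul_ne_top (hfin p q hp hq) (hfin r s hr hs2))
        (ENNReal.mul_ne_top (hfin p r hp hr) (hfin q s hq hs2)), ENNReal.toReal_mul,
        ENNReal.toReal_mul, ENNReal.toReal_mul] at h'
  by_cases hex : ∃ o, o ≠ pinf ∧ ∃ a, a ≠ pinf ∧ d o a ≠ 0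
  swap
  · push_neg at hex
    refine ⟨fun _ => 0, fun x y hx hy => ?_⟩
    rw [hex x hx y hy]
    simp
  obtain ⟨o, ho, a, ha, hoa⟩ := hex
  have hα : 0 < (d o a).toReal := ENNReal.toReal_pos hoa (hfin o a ho ha)
  have h2α : (2 * (d o a).toReal) ≠ 0 := by positivity
  have spec : ∀ z, z ≠ pinf →
      |((d o z).toReal ^ 2 + (d o a).toReal ^ 2 - (d a z).toReal ^ 2) / (2 * (d o a).toReal)| = (d o z).toReal ∧
      |((d o z).toReal ^ 2 + (d o a).toReal ^ 2 - (d a z).toReal ^ 2) / (2 * (d o a).toReal) - (d o a).toReal|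
        = (d a z).toReal := by
    intro z hz
    have h := hlinR o z a ho hz ha
    rw [hsymm z a] at h
    have hu0 : (0:ℝ) ≤ (d o z).toReal := ENNReal.toReal_nonneg
    have ht0 : (0:ℝ) ≤ (d a z).toReal := ENNReal.toReal_nonneg
    rcases h with h | h | h
    · have ht : (d a z).toReal = (d o z).toReal - (d o a).toReal := by linarith
      have hP : ((d o z).toReal ^ 2 + (d o a).toReal ^ 2 - (d a z).toReal ^ 2) / (2 * (d o a).toReal)
          = (d o z).toReal := by
        rw [div_eq_iff h2α, ht]; ring
      rw [hP]
      constructor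
      · exact abs_of_nonneg hu0
      · rw [abs_of_nonneg (by linarith)]; linarith
    · have ht : (d a z).toReal = (d o a).toReal - (d o z).toReal := by linarith
      have hP : ((d o z).toReal ^ 2 + (d o a).toReal ^ 2 - (d a z).toReal ^ 2) / (2 * (d o a).toReal)
          = (d o z).toReal := by
        rw [div_eq_iff h2α, ht]; ring
      rw [hP]
      constructor
      · exact abs_of_nonneg hu0
      · rw [abs_of_nonpos (by linarith)]; linarith
    · have ht : (d a z).toReal = (d o z).toReal + (d o a).toReal := by linarith
      have hP : ((d o z).toReal ^ 2 + (d o a).toReal ^ 2 - (d a z).toReal ^ 2) / (2 * (d o a).toReal)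
          = -(d o z).toReal := by
        rw [div_eq_iff h2α, ht]; ring
      rw [hP]
      constructor
      · rw [abs_neg]; exact abs_of_nonneg hu0
      · rw [abs_of_nonpos (by linarith)]; linarith
  refine ⟨fun z => ((d o z).toReal ^ 2 + (d o a).toReal ^ 2 - (d a z).toReal ^ 2) / (2 * (d o a).toReal),
    fun x y hx hy => ?_⟩
  obtain ⟨hx1, hx2⟩ := spec x hx
  obtain ⟨hy1, hy2⟩ := spec y hy
  set px := ((d o x).toReal ^ 2 + (d o a).toReal ^ 2 - (d a x).toReal ^ 2) / (2 * (d o a).toReal)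
    with hpx
  set py := ((d o y).toReal ^ 2 + (d o a).toReal ^ 2 - (d a y).toReal ^ 2) / (2 * (d o a).toReal)
    with hpy
  have h1 := hlinR x y o hx hy ho
  rw [hsymm x o, hsymm y o, ← hx1, ← hy1] at h1
  have h2 := hlinR x y a hx hy ha
  rw [hsymm x a, hsymm y a, ← hx2, ← hy2] at h2
  have h3 := hquadR o a x y ho ha hx hy
  rw [← hx1, ← hy1, ← hx2, ← hy2] at h3
  exact (key hα ENNReal.toReal_nonneg h1 h2 h3).symm
end

section
/- Let B ⊂ ℝ^{k-1} × [0,∞) be a closed subset containing k+1 affinely independent points, such that whenever x, y ∈ B with x_k < y_k (last coordinates), the ray {x + t(y−x) : t ≥ 0} is contained in B. Then B = ℝ^{k-1} × [a,∞) for some a ≥ 0. -/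
/-!
Up to closure, the ray condition forces `B` to be convex: a segment `[u, w]` with
`f u = f w` is a limit of segments along which `f` strictly increases. An affinely spanning
convex set has an interior point `c`, and pushing rays from points of `B` slightly below `c`
back through `c` shows that `B` contains the whole open half-space above any of its points.
Taking `a = inf f(B)` and closing up gives `B = {a ≤ f}`.
-/

open Set Filter Topology

def RayClosed {E : Type*} [AddCommGroup E] [Module ℝ E] (f : E →ₗ[ℝ] ℝ) (B : Set E) : Prop :=
  ∀ x ∈ B, ∀ y ∈ B, f x < f y → ∀ t : ℝ, 0 ≤ t → x + t • (y - x) ∈ B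

lemma IsClosed.mem_of_forall_pos_mem {X : Type*} [TopologicalSpace X] {B : Set X}
    (hB : IsClosed B) {g : ℝ → X} (hg : Continuous g) (h : ∀ ε > 0, g ε ∈ B) : g 0 ∈ B :=
  hB.mem_of_tendsto ((hg.continuousWithinAt (s := Ioi 0)).tendsto)
    (eventually_nhdsWithin_of_forall h)

lemma exists_apply_lt_of_affineSpan_eq_top {E : Type*} [AddCommGroup E] [Module ℝ E]
    {f : E →ₗ[ℝ] ℝ} (hf : f ≠ 0) {B : Set E} (hspan : affineSpan ℝ B = ⊤) :
    ∃ x ∈ B, ∃ y ∈ B, f x < f y := by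
  by_contra! hconst
  obtain ⟨x₀, hx₀⟩ : B.Nonempty := by
    rw [← affineSpan_nonempty (k := ℝ), hspan]
    exact univ_nonempty
  have hB : B ⊆ AffineSubspace.mk' x₀ (LinearMap.ker f) := fun x hx => by
    simp [AffineSubspace.mem_mk', le_antisymm (hconst x hx x₀ hx₀) (hconst x₀ hx₀ x hx)]
  have hker : ⊤ ≤ LinearMap.ker f := by
    simpa [hspan] using AffineSubspace.direction_le (affineSpan_le.2 hB)
  exact hf (LinearMap.ker_eq_top.1 (top_unique hker))

namespace RayClosed

variable {E : Type*} [AddCommGroup E] [Module ℝ E] {f : E →ₗ[ℝ] ℝ} {B : Set E}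

lemma exists_lt_apply (hB : RayClosed f B) {x y : E} (hx : x ∈ B) (hy : y ∈ B)
    (hxy : f x < f y) (b : ℝ) : ∃ z ∈ B, b < f z := by
  obtain ⟨n, hn⟩ := exists_nat_gt ((b - f x) / (f y - f x))
  refine ⟨x + (n : ℝ) • (y - x), hB x hx y hy hxy n n.cast_nonneg, ?_⟩
  rw [div_lt_iff₀ (sub_pos.2 hxy)] at hn
  simp only [map_add, map_smul, map_sub, smul_eq_mul]
  linarith

variable [TopologicalSpace E] [IsTopologicalAddGroup E] [ContinuousSMul ℝ E]

lemma add_smul_sub_mem_of_le (hB : RayClosed f B) (hcl : IsClosed B)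
    (hunb : ∀ b : ℝ, ∃ z ∈ B, b < f z) {x y : E} (hx : x ∈ B) (hy : y ∈ B)
    (hxy : f x ≤ f y) {t : ℝ} (ht : 0 ≤ t) : x + t • (y - x) ∈ B := by
  obtain ⟨z, hz, hyz⟩ := hunb (f y)
  simpa using hcl.mem_of_forall_pos_mem (g := fun ε => x + t • (y + ε • (z - y) - x))
    (by fun_prop) fun ε hε => by
      refine hB x hx _ (hB y hy z hz hyz ε hε.le) ?_ t ht
      simp only [map_add, map_smul, map_sub, smul_eq_mul]
      nlinarith

lemma convex (hB : RayClosed f B) (hcl : IsClosed B) (hunb : ∀ b : ℝ, ∃ z ∈ B, b < f z) :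
    Convex ℝ B := by
  intro u hu w hw α β hα hβ hαβ
  obtain rfl : α = 1 - β := by linarith
  rcases le_total (f u) (f w) with huw | hwu
  · convert hB.add_smul_sub_mem_of_le hcl hunb hu hw huw hβ using 1
    module
  · convert hB.add_smul_sub_mem_of_le hcl hunb hw hu hwu hα using 1
    module

lemma mem_of_mem_interior_of_apply_lt (hB : RayClosed f B) {c z : E} (hc : c ∈ interior B)
    (hcz : f c < f z) : z ∈ B := by
  have hnear : ∀ᶠ r in 𝓝[>] (0 : ℝ), c + r • (c - z) ∈ B := by
    have hcont : Tendsto (fun r : ℝ => c + r • (c - z)) (𝓝 0) (𝓝 c) := by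
      have : Continuous fun r : ℝ => c + r • (c - z) := by fun_prop
      simpa using this.tendsto 0
    exact nhdsWithin_le_nhds (hcont (mem_interior_iff_mem_nhds.1 hc))
  obtain ⟨r, hwB, hr : 0 < r⟩ := (hnear.and self_mem_nhdsWithin).exists
  have hwc : f (c + r • (c - z)) < f c := by
    simp only [map_add, map_smul, map_sub, smul_eq_mul]
    nlinarith
  convert hB _ hwB c (interior_subset hc) hwc ((1 + r) / r) (by positivity) using 1
  rw [show c - (c + r • (c - z)) = r • (z - c) by module, smul_smul, div_mul_cancel₀ _ hr.ne']
  module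

lemma mem_of_apply_lt (hB : RayClosed f B) {c w z : E} (hc : c ∈ interior B) (hw : w ∈ B)
    (hwz : f w < f z) : z ∈ B := by
  have hd : 0 < f z - f w := sub_pos.2 hwz
  obtain ⟨t, ht⟩ := exists_gt (max 1 ((f c - f w) / (f z - f w)))
  have ht₁ : 1 < t := (le_max_left _ _).trans_lt ht
  have hy : f c < f (w + t • (z - w)) := by
    have := (le_max_right _ _).trans_lt ht
    rw [div_lt_iff₀ hd] at this
    simp only [map_add, map_smul, map_sub, smul_eq_mul]
    linarith
  have hwy : f w < f (w + t • (z - w)) := by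
    simp only [map_add, map_smul, map_sub, smul_eq_mul]
    nlinarith
  convert hB w hw _ (hB.mem_of_mem_interior_of_apply_lt hc hy) hwy t⁻¹ (by positivity) using 1
  rw [add_sub_cancel_left, smul_smul, inv_mul_cancel₀ (by positivity), one_smul,
    add_sub_cancel]

end RayClosed

theorem RayClosed.exists_eq_setOf_le {E : Type*} [NormedAddCommGroup E] [NormedSpace ℝ E]
    [FiniteDimensional ℝ E] {f : E →ₗ[ℝ] ℝ} (hf : f ≠ 0) {B : Set E} (hB : RayClosed f B)
    (hcl : IsClosed B) (hspan : affineSpan ℝ B = ⊤) (hbdd : BddBelow (f '' B)) :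
    ∃ a : ℝ, B = {x | a ≤ f x} := by
  obtain ⟨x, hx, y, hy, hxy⟩ := exists_apply_lt_of_affineSpan_eq_top hf hspan
  have hunb := hB.exists_lt_apply hx hy hxy
  obtain ⟨c, hc⟩ := ((hB.convex hcl hunb).interior_nonempty_iff_affineSpan_eq_top).2 hspan
  have hgt : ∀ z, sInf (f '' B) < f z → z ∈ B := fun z hz => by
    obtain ⟨_, ⟨w, hw, rfl⟩, hwz⟩ := exists_lt_of_csInf_lt ((nonempty_of_mem hx).image f) hz
    exact hB.mem_of_apply_lt hc hw hwz
  refine ⟨sInf (f '' B), Subset.antisymm (fun z hz => csInf_le hbdd ⟨z, hz, rfl⟩) ?_⟩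
  intro z (hz : sInf (f '' B) ≤ f z)
  obtain ⟨y, -, hzy⟩ := hunb (f z)
  simpa using hcl.mem_of_forall_pos_mem (g := fun ε => z + ε • (y - z)) (by fun_prop)
    fun ε hε => hgt _ (by simp only [map_add, map_smul, map_sub, smul_eq_mul]; nlinarith)

/-- Let `B ⊂ ℝ^{k-1} × [0,∞)` be a closed set containing `k+1` affinely independent
points such that whenever `x, y ∈ B` with `x_k < y_k`, the ray from `x` through `y`
is contained in `B`. Then `B = ℝ^{k-1} × [a,∞)` for some `a ≥ 0`. -/
theorem stmt_16 (k : ℕ) (hk : 1 ≤ k) (B : Set (Fin k → ℝ)) (hB : IsClosed B)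
    (hhalf : ∀ x ∈ B, 0 ≤ x ⟨k - 1, by omega⟩)
    (haff : ∃ p : Fin (k + 1) → Fin k → ℝ, (∀ i, p i ∈ B) ∧ AffineIndependent ℝ p)
    (hray : ∀ x ∈ B, ∀ y ∈ B, x ⟨k - 1, by omega⟩ < y ⟨k - 1, by omega⟩ →
      ∀ t : ℝ, 0 ≤ t → x + t • (y - x) ∈ B) :
    ∃ a : ℝ, 0 ≤ a ∧ B = {x : Fin k → ℝ | a ≤ x ⟨k - 1, by omega⟩} := by
  obtain ⟨p, hpB, hpa⟩ := haff
  set j : Fin k := ⟨k - 1, by omega⟩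
  have hspan : affineSpan ℝ B = ⊤ := by
    refine top_unique ((hpa.affineSpan_eq_top_iff_card_eq_finrank_add_one.2 ?_).ge.trans
      (affineSpan_mono ℝ (range_subset_iff.2 hpB)))
    simp
  have hf : LinearMap.proj (R := ℝ) (φ := fun _ : Fin k => ℝ) j ≠ 0 := fun h => by
    simpa using LinearMap.congr_fun h (Pi.single j 1)
  obtain ⟨a, ha⟩ := RayClosed.exists_eq_setOf_le hf hray hB hspan
    ⟨0, by rintro _ ⟨x, hx, rfl⟩; exact hhalf x hx⟩
  refine ⟨a, ?_, ha⟩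
  simpa using hhalf (Pi.single j a) (by rw [ha]; simp)
end

section
/- Let X be a geodesic Ptolemy metric space, c: [0,∞) → X a geodesic ray parameterized by arclength, and b_c(x) = lim_{t→∞} (d(x, c(t)) − t) its Busemann function. Then b_c is well-defined (the limit exists) and is a convex function: for any midpoint m of x and y, b_c(m) ≤ (b_c(x) + b_c(y))/2. -/
/-!
Along the ray, `t ↦ d(x, c t) - t` is non-increasing and bounded below by `-d(x, c 0)`, so it
converges. Applying Ptolemy's inequality to `x, y, m, c t` gives
`d(x,y) d(m, c t) ≤ d(x,y) (d(x, c t) + d(y, c t)) / 2` for a midpoint `m`; subtracting `t` and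
letting `t → ∞` yields the midpoint convexity of the limit.
-/

open Filter Topology Set

section Busemann

variable {X : Type*} [MetricSpace X]

theorem dist_midpoint_le_of_ptolemy
    (hpt : ∀ x y z w : X, dist x y * dist z w ≤ dist x z * dist y w + dist x w * dist y z)
    {x y m : X} (hxm : dist x m = dist x y / 2) (hmy : dist m y = dist x y / 2) (z : X) :
    dist m z ≤ (dist x z + dist y z) / 2 := by
  rcases (dist_nonneg (x := x) (y := y)).eq_or_lt with hxy | hxy
  · have hx : m = x := (dist_eq_zero.mp (by rw [hxm, ← hxy]; ring)).symm
    have hy : m = y := dist_eq_zero.mp (by rw [hmy, ← hxy]; ring)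
    rw [← hx, ← hy]
    linarith
  · have h := hpt x y m z
    rw [dist_comm y m, hxm, hmy] at h
    refine le_of_mul_le_mul_left ?_ hxy
    linarith

section Ray

variable {c : ℝ → X}

theorem antitone_dist_sub_of_isometry_Ici
    (hc : ∀ s t : ℝ, 0 ≤ s → 0 ≤ t → dist (c s) (c t) = |s - t|) (x : X) :
    Antitone fun t : Ici (0 : ℝ) => dist x (c t) - t := by
  intro s t hst
  have htri := dist_triangle x (c s) (c t)
  rw [hc _ _ s.2 t.2, abs_of_nonpos (sub_nonpos.mpr (Subtype.coe_le_coe.mpr hst))] at htri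
  dsimp only
  linarith

theorem neg_dist_le_dist_sub_of_isometry_Ici
    (hc : ∀ s t : ℝ, 0 ≤ s → 0 ≤ t → dist (c s) (c t) = |s - t|) (x : X) {t : ℝ} (ht : 0 ≤ t) :
    -dist x (c 0) ≤ dist x (c t) - t := by
  have htri := dist_triangle (c 0) x (c t)
  rw [hc 0 t le_rfl ht, abs_of_nonpos (by linarith), dist_comm (c 0) x] at htri
  linarith

end Ray

/-- An infimum over the ray rather than a `limUnder`, so that no junk value is involved: the
defining family is antitone, and `tendsto_busemann` identifies the infimum with the limit. -/
noncomputable def busemann (c : ℝ → X) (x : X) : ℝ :=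
  ⨅ t : Ici (0 : ℝ), dist x (c t) - t

theorem tendsto_busemann {c : ℝ → X}
    (hc : ∀ s t : ℝ, 0 ≤ s → 0 ≤ t → dist (c s) (c t) = |s - t|) (x : X) :
    Tendsto (fun t => dist x (c t) - t) atTop (𝓝 (busemann c x)) := by
  have hbdd : BddBelow (range fun t : Ici (0 : ℝ) => dist x (c t) - t) := by
    refine ⟨-dist x (c 0), ?_⟩
    rintro _ ⟨t, rfl⟩
    exact neg_dist_le_dist_sub_of_isometry_Ici hc x t.2
  exact (tendsto_comp_val_Ici_atTop (a := 0)).mp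
    (tendsto_atTop_ciInf (antitone_dist_sub_of_isometry_Ici hc x) hbdd)

theorem busemann_midpoint_le_of_ptolemy
    (hpt : ∀ x y z w : X, dist x y * dist z w ≤ dist x z * dist y w + dist x w * dist y z)
    {c : ℝ → X} (hc : ∀ s t : ℝ, 0 ≤ s → 0 ≤ t → dist (c s) (c t) = |s - t|)
    {x y m : X} (hxm : dist x m = dist x y / 2) (hmy : dist m y = dist x y / 2) :
    busemann c m ≤ (busemann c x + busemann c y) / 2 := by
  refine le_of_tendsto_of_tendsto' (tendsto_busemann hc m)
    (((tendsto_busemann hc x).add (tendsto_busemann hc y)).div_const 2) fun t => ?_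
  linarith [dist_midpoint_le_of_ptolemy hpt hxm hmy (c t)]

end Busemann

theorem stmt_18_general {X : Type*} [MetricSpace X]
    (hpt : ∀ x y z w : X, dist x y * dist z w ≤ dist x z * dist y w + dist x w * dist y z)
    (c : ℝ → X) (hc : ∀ s t : ℝ, 0 ≤ s → 0 ≤ t → dist (c s) (c t) = |s - t|) :
    ∃ b : X → ℝ,
      (∀ x : X, Filter.Tendsto (fun t => dist x (c t) - t) Filter.atTop (nhds (b x))) ∧
      (∀ x y m : X, dist x m = dist x y / 2 → dist m y = dist x y / 2 →
        b m ≤ (b x + b y) / 2) :=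
  ⟨busemann c, tendsto_busemann hc, fun _ _ _ => busemann_midpoint_le_of_ptolemy hpt hc⟩

/-- In a geodesic Ptolemy metric space, the Busemann function
`b_c(x) = lim_{t→∞} (d(x,c(t)) − t)` of a geodesic ray `c` is well-defined and
convex: `b_c(m) ≤ (b_c(x)+b_c(y))/2` for every midpoint `m` of `x` and `y`. -/
theorem stmt_18 {X : Type*} [MetricSpace X]
    (hgeo : ∀ x y : X, ∃ f : ℝ → X, f 0 = x ∧ f (dist x y) = y ∧
      ∀ s t : ℝ, s ∈ Set.Icc 0 (dist x y) → t ∈ Set.Icc 0 (dist x y) →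
        dist (f s) (f t) = |s - t|)
    (hpt : ∀ x y z w : X, dist x y * dist z w ≤ dist x z * dist y w + dist x w * dist y z)
    (c : ℝ → X) (hc : ∀ s t : ℝ, 0 ≤ s → 0 ≤ t → dist (c s) (c t) = |s - t|) :
    ∃ b : X → ℝ,
      (∀ x : X, Filter.Tendsto (fun t => dist x (c t) - t) Filter.atTop (nhds (b x))) ∧
      (∀ x y m : X, dist x m = dist x y / 2 → dist m y = dist x y / 2 →
        b m ≤ (b x + b y) / 2) :=
  stmt_18_general hpt c hc
end

section
/- Let σ be a Ptolemy segment with boundary points x₁ and x₃ such that x₁ is the remote point ∞ (in an extended Ptolemy space). Then σ \ {∞} is isometric to a closed half-line [0,∞): for points x < s < t < ∞ on the segment (in its linear order with x the finite boundary point), d(x,s) + d(s,t) = d(x,t). -/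
open scoped ENNReal

/-- Let `σ` be a Ptolemy segment in an extended Ptolemy space, parameterized
injectively by `γ : [0,1] → X`, one of whose boundary points `γ 1` is the remote
point `∞`.  Then `σ \ {∞}` is isometric to a closed half-line: for points
`x < s < t < ∞` in the linear order of the segment, `d(x,s) + d(s,t) = d(x,t)`. -/
theorem stmt_19 {X : Type*} (d : X → X → ℝ≥0∞) (pinf : X)
    (hsymm : ∀ x y, d x y = d y x)
    (hzero : ∀ x y, d x y = 0 ↔ x = y)
    (hfin : ∀ x y, x ≠ pinf → y ≠ pinf → d x y ≠ ∞)
    (hinf : ∀ x, x ≠ pinf → d x pinf = ∞)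
    (htri : ∀ x y z, x ≠ pinf → y ≠ pinf → z ≠ pinf → d x z ≤ d x y + d y z)
    (hpt : ∀ x y z w : X,
      extD d pinf x y * extD d pinf z w ≤
        extD d pinf x z * extD d pinf y w + extD d pinf x w * extD d pinf y z)
    (γ : ℝ → X)
    (hinj : ∀ s t : ℝ, s ∈ Set.Icc (0:ℝ) 1 → t ∈ Set.Icc (0:ℝ) 1 → γ s = γ t → s = t)
    (hend : γ 1 = pinf)
    (hseg : ∀ t₁ t₂ t₃ t₄ : ℝ, 0 ≤ t₁ → t₁ ≤ t₂ → t₂ ≤ t₃ → t₃ ≤ t₄ → t₄ ≤ 1 →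
      extD d pinf (γ t₁) (γ t₃) * extD d pinf (γ t₂) (γ t₄) =
        extD d pinf (γ t₁) (γ t₂) * extD d pinf (γ t₃) (γ t₄) +
          extD d pinf (γ t₁) (γ t₄) * extD d pinf (γ t₂) (γ t₃)) :
    ∀ tx ts tt : ℝ, 0 ≤ tx → tx < ts → ts < tt → tt < 1 →
      d (γ tx) (γ ts) + d (γ ts) (γ tt) = d (γ tx) (γ tt) := by
  intro tx ts tt h0 hxs hst ht1
  have hne : ∀ u : ℝ, 0 ≤ u → u < 1 → γ u ≠ pinf := by
    intro u hu0 hu1 h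
    have := hinj u 1 ⟨hu0, hu1.le⟩ ⟨zero_le_one, le_rfl⟩ (h.trans hend.symm)
    exact absurd this hu1.ne
  have hx := hne tx h0 (hxs.trans (hst.trans ht1))
  have hs := hne ts (h0.trans hxs.le) (hst.trans ht1)
  have ht := hne tt (h0.trans (hxs.trans hst).le) ht1
  have key := hseg tx ts tt 1 h0 hxs.le hst.le ht1.le le_rfl
  have eD : ∀ a b : X, a ≠ pinf → b ≠ pinf → extD d pinf a b = d a b := by
    intro a b ha hb
    simp [extD, ha, hb]
  have eI : ∀ a : X, a ≠ pinf → extD d pinf a pinf = 1 := by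
    intro a ha
    simp [extD, ha]
  rw [hend, eD _ _ hx ht, eD _ _ hx hs, eD _ _ hs ht, eI _ hx, eI _ hs, eI _ ht,
    mul_one, mul_one, one_mul] at key
  exact key.symm
end
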